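/- arXiv:2504.02243 — 5 statements merged into one kernel-verified Lean document; each statement's English description precedes it below -/
import Mathlib

section
/- Let (a_n) be a sequence of complex numbers with |a_n| → 0 and χ((a_n)) < 1, let f(z) = Σ_{n=0}^∞ a_n z^{\underline{n}} be the entire function defined by the binomial series, and suppose f has order of growth ρ with 0 < ρ < 1. If v = limsup_{n→∞} n·|a_n|^{ρ/n} is finite, then the type of f satisfies τ(f) ≤ v/(eρ). -/
open Filter Finset

/-- The falling factorial `z(z-1)⋯(z-n+1)`. -/
noncomputable def ff (z : ℂ) (n : ℕ) : ℂ := ∏ k ∈ Finset.range n, (z - (k : ℂ))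

/-- The maximum modulus `M(r,f) = max_{|z| ≤ r} |f(z)|`. -/
noncomputable def maxMod (f : ℂ → ℂ) (r : ℝ) : ℝ :=
  sSup ((fun z => ‖f z‖) '' Metric.closedBall (0 : ℂ) r)

/-- The order of growth `ρ(f) = limsup_{r → ∞} log log M(r,f) / log r`. -/
noncomputable def growthOrder (f : ℂ → ℂ) : ℝ :=
  Filter.limsup (fun r : ℝ => Real.log (Real.log (maxMod f r)) / Real.log r) Filter.atTop

/-- The type `τ(f) = limsup_{r → ∞} log M(r,f) / r^ρ`, as an extended real number. -/
noncomputable def growthTypeE (f : ℂ → ℂ) (ρ : ℝ) : EReal :=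
  Filter.limsup (fun r : ℝ => ((Real.log (maxMod f r) / r ^ ρ : ℝ) : EReal)) Filter.atTop

/-- `χ((a_n)) = limsup_{n → ∞} (n log n)/(-log |a_n|)`. -/
noncomputable def chi (a : ℕ → ℂ) : ℝ :=
  Filter.limsup (fun n : ℕ => (n : ℝ) * Real.log n / (-Real.log ‖a n‖)) Filter.atTop

lemma log_le_div_exp {y : ℝ} (hy : 0 < y) : Real.log y ≤ y / Real.exp 1 := by
  have h := Real.log_le_sub_one_of_pos (x := y / Real.exp 1) (by positivity)
  have h2 : Real.log (y / Real.exp 1) = Real.log y - 1 := by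
    rw [Real.log_div (ne_of_gt hy) (Real.exp_ne_zero 1), Real.log_exp]
  linarith

lemma mul_log_div_le {B x : ℝ} (hB : 0 < B) (hx : 0 < x) :
    x * Real.log (B / x) ≤ B / Real.exp 1 := by
  have h := log_le_div_exp (y := B / x) (by positivity)
  calc x * Real.log (B / x) ≤ x * (B / x / Real.exp 1) :=
        mul_le_mul_of_nonneg_left h hx.le
    _ = B / Real.exp 1 := by field_simp

lemma eventually_poly_le {c₁ c₂ c₃ s t c₄ : ℝ} (hst : s < t) (ht : 0 < t) (hc₄ : 0 < c₄) :
    ∀ᶠ r : ℝ in atTop, c₁ * r ^ s + c₂ * Real.log r + c₃ ≤ c₄ * r ^ t := by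
  have h1 : Tendsto (fun r : ℝ => c₁ * r ^ (s - t)) atTop (nhds 0) := by
    have := (tendsto_rpow_neg_atTop (by linarith : 0 < t - s)).const_mul c₁
    simpa [neg_sub] using this
  have h2 : Tendsto (fun r : ℝ => c₂ * (Real.log r / r ^ t)) atTop (nhds 0) := by
    have := ((isLittleO_log_rpow_atTop ht).tendsto_div_nhds_zero).const_mul c₂
    simpa using this
  have h3 : Tendsto (fun r : ℝ => c₃ * r ^ (-t)) atTop (nhds 0) := by
    have := (tendsto_rpow_neg_atTop ht).const_mul c₃
    simpa using this
  have h := (h1.add h2).add h3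
  simp only [add_zero] at h
  have h4 := h.eventually (gt_mem_nhds hc₄)
  filter_upwards [h4, eventually_ge_atTop (1 : ℝ)] with r h4 hr1
  have hr0 : (0 : ℝ) < r := lt_of_lt_of_le one_pos hr1
  have hrt : (0 : ℝ) < r ^ t := Real.rpow_pos_of_pos hr0 t
  have key : c₁ * r ^ s + c₂ * Real.log r + c₃
      = (c₁ * r ^ (s - t) + c₂ * (Real.log r / r ^ t) + c₃ * r ^ (-t)) * r ^ t := by
    rw [add_mul, add_mul, mul_assoc, mul_assoc, mul_assoc, ← Real.rpow_add hr0,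
      ← Real.rpow_add hr0, div_mul_cancel₀ _ hrt.ne', sub_add_cancel, neg_add_cancel,
      Real.rpow_zero, mul_one]
  rw [key]
  exact mul_le_mul_of_nonneg_right h4.le hrt.le

set_option maxHeartbeats 1000000 in
lemma key_bound (a : ℕ → ℂ) (f : ℂ → ℂ) (ρ w : ℝ) (hρ0 : 0 < ρ) (hρ1 : ρ < 1) (hw : 0 < w)
    (hf : ∀ z : ℂ, HasSum (fun n => a n * ff z n) (f z))
    (N0 : ℕ) (hN1 : 1 ≤ N0)
    (hN0 : ∀ n : ℕ, N0 ≤ n → ‖a n‖ ≤ (w / n) ^ ((n : ℝ) / ρ))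
    (ε : ℝ) (hε : 0 < ε) :
    ∀ᶠ r : ℝ in atTop,
      Real.log (maxMod f r) ≤ (w / (Real.exp 1 * ρ) + ε) * r ^ ρ := by
  have he1 : (0:ℝ) < Real.exp 1 := Real.exp_pos 1
  have hiρ' : 1 < 1 / ρ := by rw [lt_div_iff₀ hρ0]; linarith
  have hiρ : 1 ≤ 1 / ρ := hiρ'.le
  set c₄ : ℝ := w / (Real.exp 1 * ρ) + ε / 4 with hc₄def
  have hc₄ : 0 < c₄ := by positivity
  set A : ℝ := (∑ k ∈ Finset.range N0, ‖a k‖) + 1 with hAdef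
  have hA1 : 1 ≤ A := by
    have : (0:ℝ) ≤ ∑ k ∈ Finset.range N0, ‖a k‖ :=
      Finset.sum_nonneg fun k _ => norm_nonneg _
    linarith
  have hA0 : 0 < A := lt_of_lt_of_le one_pos hA1
  have han : ∀ n : ℕ, n < N0 → ‖a n‖ ≤ A := by
    intro n hn
    have := Finset.single_le_sum (f := fun k => ‖a k‖) (fun k _ => norm_nonneg _)
      (Finset.mem_range.mpr hn)
    linarith
  -- eventual hypotheses on r
  have hrM' : ∀ᶠ r : ℝ in atTop, 4*w*r^ρ + 1 ≤ r := by
    have := eventually_poly_le (c₁ := 4*w) (c₂ := 0) (c₃ := 1) (s := ρ) (t := 1)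
      (c₄ := 1) hρ1 one_pos one_pos
    filter_upwards [this] with r h
    simpa using h
  have hrN' : ∀ᶠ r : ℝ in atTop, (N0:ℝ) ≤ 4*w*r^ρ := by
    have h : Tendsto (fun r : ℝ => 4*w*r^ρ) atTop atTop := by
      apply Tendsto.const_mul_atTop (by positivity : (0:ℝ) < 4*w)
      exact tendsto_rpow_atTop hρ0
    exact h.eventually_ge_atTop _
  have hr3' : ∀ᶠ r : ℝ in atTop, 2 * w^(1/ρ) * r^(1-1/ρ) ≤ 1/2 := by
    have h : Tendsto (fun r : ℝ => 2 * w^(1/ρ) * r^(1-1/ρ)) atTop (nhds 0) := by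
      have := (tendsto_rpow_neg_atTop (by linarith [hiρ'] : (0:ℝ) < 1/ρ - 1)).const_mul
        (2 * w^(1/ρ))
      simpa [neg_sub] using this
    filter_upwards [h.eventually (gt_mem_nhds (by norm_num : (0:ℝ) < 1/2))] with r h
    exact h.le
  have hE0' : ∀ᶠ r : ℝ in atTop,
      0 * r ^ (0:ℝ) + ((1:ℝ)+N0) * Real.log r + (Real.log A + N0 * Real.log (1+N0))
        ≤ c₄ * r ^ ρ := eventually_poly_le hρ0 hρ0 hc₄
  have hE1' : ∀ᶠ r : ℝ in atTop,
      16*w^2 * r ^ (2*ρ-1) + 1 * Real.log r + 0 ≤ (ε/4) * r ^ ρ :=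
    eventually_poly_le (by linarith) hρ0 (by linarith)
  have h2e' : ∀ᶠ r : ℝ in atTop,
      0 * r ^ (0:ℝ) + 0 * Real.log r + Real.log 2 ≤ c₄ * r ^ ρ :=
    eventually_poly_le hρ0 hρ0 hc₄
  have hfin' : ∀ᶠ r : ℝ in atTop,
      0 * r ^ (0:ℝ) + 0 * Real.log r + Real.log 3 ≤ (3*ε/4) * r ^ ρ :=
    eventually_poly_le hρ0 hρ0 (by linarith)
  filter_upwards [eventually_ge_atTop (1:ℝ), hrM', hrN', hr3', hE0', hE1', h2e', hfin']
    with r hr1 hrM hrN hr3 hE0ev hE1ev h2ev hfinev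
  simp only [zero_mul, zero_add, add_zero, one_mul] at hE0ev hE1ev h2ev hfinev
  have hr0 : (0:ℝ) < r := lt_of_lt_of_le one_pos hr1
  have hrρ : (0:ℝ) < r ^ ρ := Real.rpow_pos_of_pos hr0 _
  set B : ℝ := w * r ^ ρ with hBdef
  have hB : 0 < B := by positivity
  set M : ℕ := Nat.ceil (4*B) with hMdef
  have hMr : (M:ℝ) ≤ r := by
    have h1 : (M:ℝ) < 4*B + 1 := Nat.ceil_lt_add_one (by positivity)
    have : 4*B + 1 ≤ r := by rw [hBdef] at *; linarith [hrM]
    linarith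
  have hN0M : N0 ≤ M := by
    have h1 : (N0:ℝ) ≤ 4*B := by rw [hBdef]; linarith [hrN]
    exact_mod_cast h1.trans (Nat.le_ceil _)
  set g : ℕ → ℝ := fun n => ‖a n‖ * (r + n)^n with hgdef
  have hgnn : ∀ n, 0 ≤ g n := fun n => by
    have : (0:ℝ) ≤ (r + n)^n := by positivity
    exact mul_nonneg (norm_nonneg _) this
  -- coefficient bound in pow form
  have hcoef : ∀ n : ℕ, N0 ≤ n → ‖a n‖ ≤ ((w/(n:ℝ))^(1/ρ))^n := by
    intro n hn
    have hn1 : 1 ≤ n := le_trans hN1 hn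
    have hnR : (0:ℝ) < n := by exact_mod_cast hn1
    calc ‖a n‖ ≤ (w/(n:ℝ)) ^ ((n:ℝ)/ρ) := hN0 n hn
      _ = ((w/(n:ℝ))^(1/ρ))^n := by
          rw [← Real.rpow_natCast ((w/(n:ℝ))^(1/ρ)) n, ← Real.rpow_mul (by positivity)]
          congr 1
          ring
  -- tail bound
  have htail : ∀ n : ℕ, M ≤ n → g n ≤ (1/2)^n := by
    intro n hn
    have hnN0 : N0 ≤ n := le_trans hN0M hn
    have hn1 : 1 ≤ n := le_trans hN1 hnN0
    have hnR : (0:ℝ) < n := by exact_mod_cast hn1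
    have h4B : 4*B ≤ (n:ℝ) := le_trans (Nat.le_ceil _) (by exact_mod_cast hn)
    have hbase : (w/(n:ℝ))^(1/ρ) * (r + n) ≤ 1/2 := by
      rcases le_or_gt (n:ℝ) r with hcase | hcase
      · have h4Bpos : (0:ℝ) < 4*B := by positivity
        have h1 : (w/(n:ℝ))^(1/ρ) ≤ (w/(4*B))^(1/ρ) := by
          apply Real.rpow_le_rpow (by positivity) _ (by positivity)
          exact div_le_div_of_nonneg_left hw.le h4Bpos h4B
        have h2 : (w/(4*B))^(1/ρ) = (1/4)^(1/ρ) * (1/r) := by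
          have hb : w/(4*B) = (1/4) * (1/r^ρ) := by
            rw [hBdef]; field_simp
          have hrpow : (r^ρ)^((1:ℝ)/ρ) = r := by
            rw [← Real.rpow_mul hr0.le, mul_one_div_cancel hρ0.ne', Real.rpow_one]
          rw [hb, Real.mul_rpow (by norm_num) (by positivity),
            Real.div_rpow zero_le_one hrρ.le, Real.one_rpow, hrpow]
        have h3 : r + n ≤ 2*r := by linarith
        calc (w/(n:ℝ))^(1/ρ) * (r + n) ≤ ((1/4)^(1/ρ) * (1/r)) * (2*r) := by
              apply mul_le_mul (h1.trans h2.le) h3 (by positivity) (by positivity)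
          _ = 2 * (1/4:ℝ)^(1/ρ) := by field_simp
          _ ≤ 2 * (1/4:ℝ)^(1:ℝ) := by
              have := Real.rpow_le_rpow_of_exponent_ge (by norm_num : (0:ℝ) < 1/4)
                (by norm_num : (1/4:ℝ) ≤ 1) hiρ
              linarith
          _ ≤ 1/2 := by rw [Real.rpow_one]; norm_num
      · have h1 : (w/(n:ℝ))^(1/ρ) * (r + n) ≤ (w/(n:ℝ))^(1/ρ) * (2*n) := by
          apply mul_le_mul_of_nonneg_left (by linarith) (by positivity)
        have h2 : (w/(n:ℝ))^(1/ρ) * (2*(n:ℝ)) = 2 * w^(1/ρ) * ((n:ℝ)^(1-(1/ρ):ℝ)) := by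
          rw [Real.div_rpow hw.le hnR.le, Real.rpow_sub hnR, Real.rpow_one]
          field_simp
        have h3 : ((n:ℝ))^(1-(1/ρ):ℝ) ≤ r^(1-(1/ρ):ℝ) :=
          Real.rpow_le_rpow_of_nonpos hr0 hcase.le (by linarith)
        calc (w/(n:ℝ))^(1/ρ) * (r + n) ≤ 2 * w^(1/ρ) * ((n:ℝ)^(1-(1/ρ):ℝ)) := by
              rw [← h2]; exact h1
          _ ≤ 2 * w^(1/ρ) * (r^(1-(1/ρ):ℝ)) := by
              apply mul_le_mul_of_nonneg_left h3 (by positivity)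
          _ ≤ 1/2 := hr3
    calc g n ≤ ((w/(n:ℝ))^(1/ρ))^n * (r + n)^n := by
          apply mul_le_mul_of_nonneg_right (hcoef n hnN0) (by positivity)
      _ = ((w/(n:ℝ))^(1/ρ) * (r + n))^n := (mul_pow _ _ _).symm
      _ ≤ (1/2)^n := pow_le_pow_left₀ (by positivity) hbase n
  -- summability
  have hgsum : Summable g := by
    rw [← summable_nat_add_iff M]
    apply Summable.of_nonneg_of_le (fun k => hgnn _) (fun k => ?_)
      (summable_geometric_of_lt_one (by norm_num : (0:ℝ) ≤ 1/2) (by norm_num))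
    calc g (k + M) ≤ (1/2:ℝ)^(k+M) := htail _ (Nat.le_add_left _ _)
      _ ≤ (1/2:ℝ)^k :=
          pow_le_pow_of_le_one (by norm_num) (by norm_num) (Nat.le_add_right _ _)
  -- middle / head bound
  set E0 : ℝ := A * (r + N0)^N0 with hE0def
  set E1 : ℝ := Real.exp (w * r^ρ / (Real.exp 1 * ρ) + 16*w^2*r^(2*ρ-1)) with hE1def
  have hE0pos : 0 < E0 := by positivity
  have hE1pos : 0 < E1 := Real.exp_pos _
  have hhead : ∀ n : ℕ, n < M → g n ≤ E0 + E1 := by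
    intro n hn
    rcases lt_or_ge n N0 with hc | hc
    · have h2 : (r + n)^n ≤ (r + N0)^N0 := by
        have hb1 : (r + (n:ℝ)) ≤ r + N0 := by
          have : (n:ℝ) ≤ N0 := by exact_mod_cast hc.le
          linarith
        have hb2 : (1:ℝ) ≤ r + N0 := by
          have : (0:ℝ) ≤ (N0:ℝ) := by positivity
          linarith
        calc (r + (n:ℝ))^n ≤ (r + (N0:ℝ))^n := pow_le_pow_left₀ (by positivity) hb1 n
          _ ≤ (r + (N0:ℝ))^N0 := pow_le_pow_right₀ hb2 hc.le
      have : g n ≤ E0 := by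
        rw [hE0def]
        exact mul_le_mul (han n hc) h2 (by positivity) hA0.le
      linarith
    · -- middle range
      have hn1 : 1 ≤ n := le_trans hN1 hc
      have hnR : (0:ℝ) < n := by exact_mod_cast hn1
      have hn4B : (n:ℝ) < 4*B := by
        have := Nat.lt_ceil.mp hn
        exact this
      have hnr : (n:ℝ) ≤ r := by
        have : (4*B : ℝ) ≤ r := by rw [hBdef]; linarith [hrM]
        linarith
      have hbasepos : (0:ℝ) < (w/(n:ℝ))^(1/ρ) * r := by positivity
      have hA1b : ((w/(n:ℝ))^(1/ρ) * r)^n ≤ Real.exp (B / (Real.exp 1 * ρ)) := by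
        have hlogbase : Real.log ((w/(n:ℝ))^(1/ρ) * r)
            = (1/ρ) * Real.log (w/(n:ℝ)) + Real.log r := by
          rw [Real.log_mul (by positivity) hr0.ne', Real.log_rpow (by positivity)]
        have hkey : (n:ℝ) * Real.log ((w/(n:ℝ))^(1/ρ) * r)
            = (1/ρ) * ((n:ℝ) * Real.log (B/(n:ℝ))) := by
          rw [hlogbase, hBdef]
          rw [Real.log_div (by positivity : (w * r^ρ:ℝ) ≠ 0) hnR.ne',
            Real.log_mul hw.ne' hrρ.ne', Real.log_rpow hr0,
            Real.log_div hw.ne' hnR.ne']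
          field_simp
          ring
          all_goals simp
        have hle : (n:ℝ) * Real.log ((w/(n:ℝ))^(1/ρ) * r) ≤ B / (Real.exp 1 * ρ) := by
          rw [hkey]
          have := mul_log_div_le hB hnR
          calc (1/ρ) * ((n:ℝ) * Real.log (B/(n:ℝ))) ≤ (1/ρ) * (B / Real.exp 1) := by
                apply mul_le_mul_of_nonneg_left this (by positivity)
            _ = B / (Real.exp 1 * ρ) := by
                rw [div_mul_eq_div_div, one_div, inv_mul_eq_div, div_div]
        calc ((w/(n:ℝ))^(1/ρ) * r)^n
            = Real.exp ((n:ℝ) * Real.log ((w/(n:ℝ))^(1/ρ) * r)) := by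
              rw [Real.exp_nat_mul, Real.exp_log hbasepos]
          _ ≤ Real.exp (B / (Real.exp 1 * ρ)) := Real.exp_le_exp.mpr hle
      have hA2b : (1 + (n:ℝ)/r)^n ≤ Real.exp (16*w^2*r^(2*ρ-1)) := by
        have h1 : (1 + (n:ℝ)/r) ≤ Real.exp ((n:ℝ)/r) := by
          have := Real.add_one_le_exp ((n:ℝ)/r)
          linarith
        have h2 : (1 + (n:ℝ)/r)^n ≤ Real.exp ((n:ℝ)/r)^n :=
          pow_le_pow_left₀ (by positivity) h1 n
        have h3 : Real.exp ((n:ℝ)/r)^n = Real.exp ((n:ℝ)*((n:ℝ)/r)) := by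
          rw [← Real.exp_nat_mul]
        have h4 : (n:ℝ)*((n:ℝ)/r) ≤ 16*w^2*r^(2*ρ-1) := by
          have hn2 : (n:ℝ)*(n:ℝ) ≤ 16*B^2 := by nlinarith
          have hB2 : B^2 = w^2 * r^(2*ρ) := by
            rw [hBdef, mul_pow, ← Real.rpow_natCast (r^ρ) 2, ← Real.rpow_mul hr0.le]
            norm_num [mul_comm]
          have hrr : r^(2*ρ-1) * r = r^(2*ρ) := by
            rw [← Real.rpow_add_one hr0.ne']
            ring_nf
          rw [mul_div_assoc', div_le_iff₀ hr0]
          calc (n:ℝ)*(n:ℝ) ≤ 16*B^2 := hn2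
            _ = 16*w^2*r^(2*ρ) := by rw [hB2]; ring
            _ = 16*w^2*(r^(2*ρ-1)*r) := by rw [hrr]
            _ = 16*w^2*r^(2*ρ-1)*r := by ring
        calc (1 + (n:ℝ)/r)^n ≤ Real.exp ((n:ℝ)*((n:ℝ)/r)) := by rw [← h3]; exact h2
          _ ≤ Real.exp (16*w^2*r^(2*ρ-1)) := Real.exp_le_exp.mpr h4
      have hsplit2 : (w/(n:ℝ))^(1/ρ) * (r + n) = ((w/(n:ℝ))^(1/ρ) * r) * (1 + (n:ℝ)/r) := by
        field_simp
      have : g n ≤ E1 := by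
        calc g n ≤ ((w/(n:ℝ))^(1/ρ))^n * (r + n)^n := by
              apply mul_le_mul_of_nonneg_right (hcoef n hc) (by positivity)
          _ = ((w/(n:ℝ))^(1/ρ) * (r + n))^n := (mul_pow _ _ _).symm
          _ = ((w/(n:ℝ))^(1/ρ) * r)^n * (1 + (n:ℝ)/r)^n := by
              rw [hsplit2, mul_pow]
          _ ≤ Real.exp (B / (Real.exp 1 * ρ)) * Real.exp (16*w^2*r^(2*ρ-1)) := by
              apply mul_le_mul hA1b hA2b (by positivity) (Real.exp_pos _).le
          _ = E1 := by
              rw [hE1def, ← Real.exp_add, hBdef]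
      linarith
  -- sum bound
  have hsum_head : (∑ i ∈ Finset.range M, g i) ≤ (M:ℝ) * (E0 + E1) := by
    calc (∑ i ∈ Finset.range M, g i) ≤ ∑ i ∈ Finset.range M, (E0 + E1) :=
          Finset.sum_le_sum (fun i hi => hhead i (Finset.mem_range.mp hi))
      _ = (M:ℝ) * (E0 + E1) := by rw [Finset.sum_const, Finset.card_range, nsmul_eq_mul]
  have hsum_tail : (∑' i : ℕ, g (i + M)) ≤ 2 := by
    have hts : Summable (fun i : ℕ => g (i + M)) := (summable_nat_add_iff M).mpr hgsum
    have h1 : (∑' i : ℕ, g (i + M)) ≤ ∑' i : ℕ, (1/2:ℝ)^i := by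
      apply Summable.tsum_le_tsum _ hts
        (summable_geometric_of_lt_one (by norm_num : (0:ℝ) ≤ 1/2) (by norm_num))
      intro i
      calc g (i + M) ≤ (1/2:ℝ)^(i+M) := htail _ (Nat.le_add_left _ _)
        _ ≤ (1/2:ℝ)^i :=
            pow_le_pow_of_le_one (by norm_num) (by norm_num) (Nat.le_add_right _ _)
    rw [tsum_geometric_of_lt_one (by norm_num) (by norm_num)] at h1
    norm_num at h1
    linarith
  have hS : (∑' n, g n) ≤ r * E0 + r * E1 + 2 := by
    rw [← hgsum.sum_add_tsum_nat_add M]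
    have h1 : (M:ℝ) * (E0 + E1) ≤ r * (E0 + E1) :=
      mul_le_mul_of_nonneg_right hMr (by positivity)
    nlinarith [hsum_head, hsum_tail]
  -- exp bounds on pieces
  have hpE0 : r * E0 ≤ Real.exp (c₄ * r^ρ) := by
    rw [← Real.log_le_iff_le_exp (by positivity)]
    have hlog : Real.log (r * E0) = Real.log r + Real.log A + N0 * Real.log (r + N0) := by
      rw [hE0def, Real.log_mul hr0.ne' (by positivity), Real.log_mul hA0.ne' (by positivity),
        Real.log_pow]
      ring
    have hb1 : Real.log (r + N0) ≤ Real.log (1 + N0) + Real.log r := by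
      rw [← Real.log_mul (by positivity) hr0.ne']
      apply Real.log_le_log (by positivity)
      have h1 : (r:ℝ) + N0 ≤ (1 + N0) * r := by nlinarith [(by positivity : (0:ℝ) ≤ (N0:ℝ))]
      exact h1
    have : Real.log (r * E0) ≤ (1 + (N0:ℝ)) * Real.log r + (Real.log A + N0 * Real.log (1+N0)) := by
      rw [hlog]
      have hN0nn : (0:ℝ) ≤ (N0:ℝ) := by positivity
      nlinarith [hb1]
    linarith [hE0ev]
  have hpE1 : r * E1 ≤ Real.exp (c₄ * r^ρ) := by
    rw [← Real.log_le_iff_le_exp (by positivity)]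
    rw [hE1def, Real.log_mul hr0.ne' (Real.exp_pos _).ne', Real.log_exp]
    have : w * r^ρ / (Real.exp 1 * ρ) = (w / (Real.exp 1 * ρ)) * r^ρ := by ring
    rw [this, hc₄def]
    nlinarith [hE1ev]
  have hp2 : (2:ℝ) ≤ Real.exp (c₄ * r^ρ) := by
    rw [← Real.log_le_iff_le_exp (by norm_num)]
    linarith [h2ev]
  -- maxMod bound
  have hMax : maxMod f r ≤ ∑' n, g n := by
    apply Real.sSup_le _ (tsum_nonneg hgnn)
    rintro x ⟨z, hz, rfl⟩
    have hz' : ‖z‖ ≤ r := by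
      simpa [Metric.mem_closedBall, dist_zero_right] using hz
    have hffb : ∀ n, ‖a n * ff z n‖ ≤ g n := by
      intro n
      rw [norm_mul]
      apply mul_le_mul_of_nonneg_left _ (norm_nonneg _)
      calc ‖ff z n‖ = ∏ k ∈ Finset.range n, ‖z - (k:ℂ)‖ := by
            rw [ff]; exact norm_prod _ _
        _ ≤ ∏ k ∈ Finset.range n, (r + n) := by
            apply Finset.prod_le_prod (fun k _ => norm_nonneg _)
            intro k hk
            have h1 : ‖z - (k:ℂ)‖ ≤ ‖z‖ + ‖(k:ℂ)‖ := norm_sub_le _ _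
            have h2 : ‖(k:ℂ)‖ = (k:ℝ) := by
              simp
            have h3 : (k:ℝ) ≤ n := by
              exact_mod_cast (Finset.mem_range.mp hk).le
            rw [h2] at h1
            linarith
        _ = (r + n)^n := by rw [Finset.prod_const, Finset.card_range]
    have hsumz : Summable (fun n => ‖a n * ff z n‖) :=
      Summable.of_nonneg_of_le (fun n => norm_nonneg _) hffb hgsum
    calc ‖f z‖ = ‖∑' n, a n * ff z n‖ := by rw [(hf z).tsum_eq]
      _ ≤ ∑' n, ‖a n * ff z n‖ := norm_tsum_le_tsum_norm hsumz
      _ ≤ ∑' n, g n := Summable.tsum_le_tsum hffb hsumz hgsum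
  -- conclusion
  have hMax0 : 0 ≤ maxMod f r := by
    apply Real.sSup_nonneg
    rintro x ⟨z, _, rfl⟩
    exact norm_nonneg _
  have hQ : maxMod f r ≤ Real.exp ((w / (Real.exp 1 * ρ) + ε) * r^ρ) := by
    have h3 : (∑' n, g n) ≤ 3 * Real.exp (c₄ * r^ρ) := by linarith [hS, hpE0, hpE1, hp2]
    have h4 : (3:ℝ) * Real.exp (c₄ * r^ρ) = Real.exp (Real.log 3 + c₄ * r^ρ) := by
      rw [Real.exp_add, Real.exp_log (by norm_num)]
    have h5 : Real.log 3 + c₄ * r^ρ ≤ (w / (Real.exp 1 * ρ) + ε) * r^ρ := by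
      rw [hc₄def]
      nlinarith [hfinev, hrρ]
    calc maxMod f r ≤ ∑' n, g n := hMax
      _ ≤ 3 * Real.exp (c₄ * r^ρ) := h3
      _ = Real.exp (Real.log 3 + c₄ * r^ρ) := h4
      _ ≤ Real.exp ((w / (Real.exp 1 * ρ) + ε) * r^ρ) := Real.exp_le_exp.mpr h5
  rcases eq_or_lt_of_le hMax0 with h0 | h0
  · rw [← h0, Real.log_zero]
    positivity
  · exact (Real.log_le_iff_le_exp h0).mpr hQ

theorem binomial_series_type_upper (a : ℕ → ℂ) (f : ℂ → ℂ) (ρ v : ℝ)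
    (ha0 : Filter.Tendsto (fun n => ‖a n‖) Filter.atTop (nhds 0))
    (haχ : chi a < 1)
    (hf : ∀ z : ℂ, HasSum (fun n => a n * ff z n) (f z))
    (hdiff : Differentiable ℂ f)
    (hρ : growthOrder f = ρ) (hρ0 : 0 < ρ) (hρ1 : ρ < 1)
    (hv : Filter.limsup (fun n : ℕ => (((n : ℝ) * ‖a n‖ ^ (ρ / (n : ℝ)) : ℝ) : EReal))
        Filter.atTop = ((v : ℝ) : EReal)) :
    growthTypeE f ρ ≤ ((v / (Real.exp 1 * ρ) : ℝ) : EReal) := by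
  have he1 : (0:ℝ) < Real.exp 1 := Real.exp_pos 1
  have he2 : (2:ℝ) ≤ Real.exp 1 := by
    have := Real.exp_one_gt_d9; linarith
  have hv0 : 0 ≤ v := by
    have h0 : (0 : EReal) ≤ Filter.limsup
        (fun n : ℕ => (((n : ℝ) * ‖a n‖ ^ (ρ / (n : ℝ)) : ℝ) : EReal)) Filter.atTop := by
      refine Filter.le_limsup_of_frequently_le ?_ ⟨⊤, Filter.Eventually.of_forall (fun _ => le_top)⟩
      apply Filter.Eventually.frequently
      apply Filter.Eventually.of_forall
      intro n
      exact_mod_cast (by positivity : (0:ℝ) ≤ (n : ℝ) * ‖a n‖ ^ (ρ / (n : ℝ)))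
    rw [hv] at h0
    exact_mod_cast h0
  have main : ∀ ε : ℝ, 0 < ε →
      growthTypeE f ρ ≤ ((v / (Real.exp 1 * ρ) + ε : ℝ) : EReal) := by
    intro ε hε
    set w : ℝ := v + ρ * ε with hw_def
    have hw : 0 < w := by positivity
    have hlt : Filter.limsup (fun n : ℕ => (((n : ℝ) * ‖a n‖ ^ (ρ / (n : ℝ)) : ℝ) : EReal))
        Filter.atTop < ((w : ℝ) : EReal) := by
      rw [hv]
      exact_mod_cast (by nlinarith : v < w)
    have hev := Filter.eventually_lt_of_limsup_lt hlt
    obtain ⟨N1, hN1⟩ := Filter.eventually_atTop.mp hev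
    set N0 := max N1 1 with hN0_def
    have hcoefb : ∀ n : ℕ, N0 ≤ n → ‖a n‖ ≤ (w / n) ^ ((n : ℝ) / ρ) := by
      intro n hn
      have h1 : (n : ℝ) * ‖a n‖ ^ (ρ / (n : ℝ)) < w := by
        have := hN1 n (le_trans (le_max_left _ _) hn)
        exact_mod_cast this
      have hn1 : 1 ≤ n := le_trans (le_max_right _ _) hn
      have hnpos : (0:ℝ) < n := by exact_mod_cast hn1
      have h2 : ‖a n‖ ^ (ρ / (n : ℝ)) ≤ w / n := by
        rw [le_div_iff₀ hnpos]; nlinarith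
      calc ‖a n‖ = (‖a n‖ ^ (ρ / (n : ℝ))) ^ ((n : ℝ) / ρ) := by
            rw [← Real.rpow_mul (norm_nonneg _),
              show ρ / (n:ℝ) * ((n:ℝ) / ρ) = 1 by field_simp, Real.rpow_one]
        _ ≤ (w / n) ^ ((n : ℝ) / ρ) :=
            Real.rpow_le_rpow (Real.rpow_nonneg (norm_nonneg _) _) h2 (by positivity)
    have hkey := key_bound a f ρ w hρ0 hρ1 hw hf N0 (le_max_right _ _) hcoefb (ε/2)
      (by linarith)
    have hev2 : ∀ᶠ r : ℝ in atTop,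
        ((Real.log (maxMod f r) / r ^ ρ : ℝ) : EReal)
          ≤ ((v / (Real.exp 1 * ρ) + ε : ℝ) : EReal) := by
      filter_upwards [hkey, eventually_ge_atTop (1:ℝ)] with r hk hr1
      have hrρ : (0:ℝ) < r ^ ρ := Real.rpow_pos_of_pos (by linarith) _
      rw [EReal.coe_le_coe_iff, div_le_iff₀ hrρ]
      refine le_trans hk (mul_le_mul_of_nonneg_right ?_ hrρ.le)
      have hsplit : w / (Real.exp 1 * ρ) = v / (Real.exp 1 * ρ) + ε / Real.exp 1 := by
        rw [hw_def]; field_simp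
      have hhalf : ε / Real.exp 1 ≤ ε / 2 := by
        apply div_le_div_of_nonneg_left hε.le (by norm_num) he2
      linarith
    exact Filter.limsup_le_of_le (by isBoundedDefault) hev2
  by_contra hcon
  push_neg at hcon
  obtain ⟨x, hx1, hx2⟩ := EReal.exists_between_coe_real hcon
  have hxgt : v / (Real.exp 1 * ρ) < x := by exact_mod_cast hx1
  have := main (x - v / (Real.exp 1 * ρ)) (by linarith)
  rw [show v / (Real.exp 1 * ρ) + (x - v / (Real.exp 1 * ρ)) = x by ring] at this
  exact absurd (lt_of_le_of_lt this hx2) (lt_irrefl _)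
end

section
/- Let (a_n) be a sequence of complex numbers with |a_n| → 0 and χ((a_n)) < 1, let f(z) = Σ_{n=0}^∞ a_n z^{\underline{n}} be the entire function defined by the binomial series, and suppose f has order of growth ρ with 0 < ρ < 1. Then limsup_{n→∞} n·|a_n|^{ρ/n} ≤ eρ·τ(f), where τ(f) is the type of f. -/
open Filter Finset

open Metric MeasureTheory Real Bornology

lemma ff_norm (z : ℂ) (m : ℕ) : ‖ff z m‖ = ∏ k ∈ Finset.range m, ‖z - (k:ℂ)‖ := by
  simp [ff]

lemma norm_ff_le {z : ℂ} {r : ℝ} (hz : ‖z‖ ≤ r) (m : ℕ) :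
    ‖ff z m‖ ≤ ∏ k ∈ Finset.range m, (r + k) := by
  rw [ff_norm]
  apply Finset.prod_le_prod (fun k _ => norm_nonneg _)
  intro k _
  calc ‖z - (k:ℂ)‖ ≤ ‖z‖ + ‖(k:ℂ)‖ := norm_sub_le _ _
    _ ≤ r + k := by
        rw [Complex.norm_natCast]
        exact add_le_add_left hz _

lemma telescope {r : ℝ} (hr : 0 < r) (m : ℕ) :
    ∏ k ∈ Finset.range m, ((r + k) / (r + k + 2)) = r * (r + 1) / ((r + m) * (r + m + 1)) := by
  induction m with
  | zero => simp; field_simp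
  | succ m ih =>
      rw [Finset.prod_range_succ, ih]
      have h1 : r + m > 0 := by positivity
      have h2 : r + m + 1 > 0 := by positivity
      have h3 : r + m + 2 > 0 := by positivity
      push_cast
      field_simp
      ring

lemma summable_coeff (a : ℕ → ℂ) (f : ℂ → ℂ)
    (hf : ∀ z : ℂ, HasSum (fun n => a n * ff z n) (f z)) {r : ℝ} (hr : 0 < r) :
    Summable (fun m => ‖a m‖ * ∏ k ∈ Finset.range m, (r + k)) := by
  set R : ℕ := ⌈r⌉₊ + 2 with hR
  have hRr : r + 2 ≤ (R : ℝ) := by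
    have := Nat.le_ceil r
    push_cast [hR]
    linarith
  have h0 : Tendsto (fun m => ‖a m * ff (-(R:ℂ)) m‖) atTop (nhds 0) := by
    simpa using (hf (-(R:ℂ))).summable.tendsto_atTop_zero.norm
  have hev : ∀ᶠ m in atTop, ‖a m * ff (-(R:ℂ)) m‖ ≤ 1 :=
    h0.eventually_le_const (by norm_num)
  have hprodR : ∀ m, ‖ff (-(R:ℂ)) m‖ = ∏ k ∈ Finset.range m, ((R:ℝ) + k) := by
    intro m
    rw [ff_norm]
    apply Finset.prod_congr rfl
    intro k _
    have h : -(R:ℂ) - (k:ℂ) = ((-((R:ℝ) + k) : ℝ) : ℂ) := by push_cast; ring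
    rw [h, Complex.norm_real, Real.norm_eq_abs, abs_neg, abs_of_nonneg (by positivity)]
  apply Summable.of_norm_bounded_eventually_nat
    (g := fun m => (r * (r+1)) * (1 / (m:ℝ)^2))
    ((Real.summable_one_div_nat_pow.mpr one_lt_two).mul_left _)
  filter_upwards [hev, eventually_ge_atTop 1] with m hm hm1
  have hm1' : (1:ℝ) ≤ (m:ℝ) := by exact_mod_cast hm1
  have hprodRpos : (0:ℝ) < ∏ k ∈ Finset.range m, ((R:ℝ) + k) :=
    Finset.prod_pos (fun k _ => by positivity)
  have hrpos : (0:ℝ) ≤ ∏ k ∈ Finset.range m, (r + k) :=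
    Finset.prod_nonneg (fun k _ => by positivity)
  rw [norm_mul, hprodR] at hm
  have ham : ‖a m‖ ≤ (∏ k ∈ Finset.range m, ((R:ℝ) + k))⁻¹ := by
    rw [← one_div]
    exact (le_div_iff₀ hprodRpos).mpr hm
  have key : ‖a m‖ * ∏ k ∈ Finset.range m, (r + k) ≤ r * (r+1) * (1 / (m:ℝ)^2) := by
    calc ‖a m‖ * ∏ k ∈ Finset.range m, (r + k)
        ≤ (∏ k ∈ Finset.range m, ((R:ℝ) + k))⁻¹ * ∏ k ∈ Finset.range m, (r + k) :=
          mul_le_mul_of_nonneg_right ham hrpos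
      _ = ∏ k ∈ Finset.range m, ((r + k) / ((R:ℝ) + k)) := by
          rw [Finset.prod_div_distrib, div_eq_inv_mul]
      _ ≤ ∏ k ∈ Finset.range m, ((r + k) / (r + k + 2)) := by
          apply Finset.prod_le_prod (fun k _ => by positivity)
          intro k _
          exact div_le_div_of_nonneg_left (by positivity) (by positivity) (by linarith)
      _ = r * (r + 1) / ((r + m) * (r + m + 1)) := telescope hr m
      _ ≤ r * (r+1) * (1 / (m:ℝ)^2) := by
          rw [mul_one_div]
          exact div_le_div_of_nonneg_left (by positivity) (by nlinarith) (by nlinarith)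
  calc ‖‖a m‖ * ∏ k ∈ Finset.range m, (r + k)‖
      = ‖a m‖ * ∏ k ∈ Finset.range m, (r + k) := by
        rw [Real.norm_eq_abs, abs_of_nonneg (by positivity)]
    _ ≤ _ := key

-- z - k ≠ 0 on the sphere of radius r > k
lemma sphere_ne (r : ℝ) {z : ℂ} (hz : z ∈ Metric.sphere (0:ℂ) r) {k : ℕ} (hk : (k:ℝ) < r) :
    z - (k:ℂ) ≠ 0 := by
  intro h
  rw [sub_eq_zero] at h
  rw [mem_sphere_zero_iff_norm] at hz
  rw [h] at hz
  rw [Complex.norm_natCast] at hz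
  exact absurd hz (ne_of_lt hk)

lemma contOn_inv_prod (r : ℝ) (s : Finset ℕ) (hs : ∀ k ∈ s, (k:ℝ) < r) :
    ContinuousOn (fun z : ℂ => (∏ k ∈ s, (z - (k:ℂ)))⁻¹) (Metric.sphere (0:ℂ) r) := by
  apply ContinuousOn.inv₀
  · exact (continuousOn_finset_prod s (fun k _ => by fun_prop))
  · intro z hz
    exact Finset.prod_ne_zero_iff.mpr (fun k hk => sphere_ne r hz (hs k hk))

lemma integral_inv_prod_Icc (r : ℝ) :
    ∀ (d m n : ℕ), n = m + d → (n : ℝ) < r →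
    (∮ z in C(0, r), (∏ k ∈ Finset.Icc m n, (z - (k:ℂ)))⁻¹)
      = if d = 0 then 2 * Real.pi * Complex.I else 0 := by
  intro d
  induction d with
  | zero =>
      intro m n hn hr
      subst hn
      simp only [Nat.add_zero, Finset.Icc_self, Finset.prod_singleton, if_pos rfl]
      apply circleIntegral.integral_sub_inv_of_mem_ball
      rw [mem_ball_zero_iff, Complex.norm_natCast]
      exact hr
  | succ d ih =>
      intro m n hn hr
      have hmn : m < n := by omega
      have hm_lt : (m:ℝ) < r := lt_of_le_of_lt (by exact_mod_cast Nat.cast_le.mpr hmn.le) hr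
      have hr0 : (0:ℝ) < r := lt_of_le_of_lt (Nat.cast_nonneg n) hr
      have hlt : ∀ k ∈ Finset.Icc m n, (k:ℝ) < r := by
        intro k hk
        rw [Finset.mem_Icc] at hk
        exact lt_of_le_of_lt (by exact_mod_cast hk.2) hr
      -- the two sub-products
      set A : ℂ → ℂ := fun z => (∏ k ∈ Finset.Icc (m+1) n, (z - (k:ℂ)))⁻¹ with hA
      set B : ℂ → ℂ := fun z => (∏ k ∈ Finset.Icc m (n-1), (z - (k:ℂ)))⁻¹ with hB
      have heq : Set.EqOn (fun z : ℂ => (∏ k ∈ Finset.Icc m n, (z - (k:ℂ)))⁻¹)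
          (fun z => ((n:ℂ) - (m:ℂ))⁻¹ * (A z - B z)) (Metric.sphere (0:ℂ) r) := by
        intro z hz
        have hne : ∀ k ∈ Finset.Icc m n, z - (k:ℂ) ≠ 0 := fun k hk => sphere_ne r hz (hlt k hk)
        have hsplit1 : ∏ k ∈ Finset.Icc m n, (z - (k:ℂ))
            = (z - (m:ℂ)) * ∏ k ∈ Finset.Icc (m+1) n, (z - (k:ℂ)) := by
          rw [Finset.Icc_add_one_left_eq_Ioc, ← Finset.Ioc_insert_left hmn.le,
            Finset.prod_insert Finset.left_notMem_Ioc]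
        have hsplit2 : ∏ k ∈ Finset.Icc m n, (z - (k:ℂ))
            = (∏ k ∈ Finset.Icc m (n-1), (z - (k:ℂ))) * (z - (n:ℂ)) := by
          have h1 : Finset.Icc m (n-1) = Finset.Ico m n := by
            rw [← Finset.Ico_add_one_right_eq_Icc]
            congr 1
            omega
          rw [h1, ← Finset.Ico_insert_right hmn.le, Finset.prod_insert Finset.right_notMem_Ico,
            mul_comm]
        have hPne : ∏ k ∈ Finset.Icc m n, (z - (k:ℂ)) ≠ 0 :=
          Finset.prod_ne_zero_iff.mpr hne
        have hAne : ∏ k ∈ Finset.Icc (m+1) n, (z - (k:ℂ)) ≠ 0 := by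
          intro h0
          exact hPne (by rw [hsplit1, h0, mul_zero])
        have hBne : ∏ k ∈ Finset.Icc m (n-1), (z - (k:ℂ)) ≠ 0 := by
          intro h0
          exact hPne (by rw [hsplit2, h0, zero_mul])
        have hnm : (n:ℂ) - (m:ℂ) ≠ 0 := by
          intro h0
          rw [sub_eq_zero] at h0
          exact absurd (Nat.cast_injective h0) (by omega)
        have hzm : z - (m:ℂ) ≠ 0 := hne m (Finset.mem_Icc.mpr ⟨le_refl m, hmn.le⟩)
        have hzn : z - (n:ℂ) ≠ 0 := hne n (Finset.mem_Icc.mpr ⟨hmn.le, le_refl n⟩)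
        have hA' : A z = (z - (m:ℂ)) * (∏ k ∈ Finset.Icc m n, (z - (k:ℂ)))⁻¹ := by
          simp only [hA]
          rw [hsplit1, mul_inv, ← mul_assoc, mul_inv_cancel₀ hzm, one_mul]
        have hB' : B z = (z - (n:ℂ)) * (∏ k ∈ Finset.Icc m n, (z - (k:ℂ)))⁻¹ := by
          simp only [hB]
          rw [hsplit2, mul_inv]
          field_simp
        show (∏ k ∈ Finset.Icc m n, (z - (k:ℂ)))⁻¹ = ((n:ℂ) - (m:ℂ))⁻¹ * (A z - B z)
        rw [hA', hB', ← sub_mul]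
        have hzz : (z - (m:ℂ)) - (z - (n:ℂ)) = (n:ℂ) - (m:ℂ) := by ring
        rw [hzz, ← mul_assoc, inv_mul_cancel₀ hnm, one_mul]
      rw [circleIntegral.integral_congr hr0.le heq]
      have hlt' : ∀ k ∈ Finset.Icc (m+1) n, (k:ℝ) < r := by
        intro k hk
        have h := Finset.mem_Icc.mp hk
        exact hlt k (Finset.mem_Icc.mpr ⟨by omega, h.2⟩)
      have hlt'' : ∀ k ∈ Finset.Icc m (n-1), (k:ℝ) < r := by
        intro k hk
        have h := Finset.mem_Icc.mp hk
        exact hlt k (Finset.mem_Icc.mpr ⟨h.1, by omega⟩)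
      have hiA : CircleIntegrable A 0 r := (contOn_inv_prod r _ hlt').circleIntegrable hr0.le
      have hiB : CircleIntegrable B 0 r := (contOn_inv_prod r _ hlt'').circleIntegrable hr0.le
      have : (∮ z in C(0, r), ((n:ℂ) - (m:ℂ))⁻¹ * (A z - B z))
          = ((n:ℂ) - (m:ℂ))⁻¹ * ∮ z in C(0, r), (A z - B z) :=
        circleIntegral.integral_const_mul _ _ _ _
      rw [this, circleIntegral.integral_sub hiA hiB]
      have e1 : (∮ z in C(0, r), A z) = if d = 0 then 2 * Real.pi * Complex.I else 0 :=
        ih (m+1) n (by omega) hr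
      have e2 : (∮ z in C(0, r), B z) = if d = 0 then 2 * Real.pi * Complex.I else 0 := by
        have := ih m (n-1) (by omega) (lt_trans (by exact_mod_cast Nat.cast_lt.mpr (by omega : n - 1 < n)) hr)
        exact this
      rw [e1, e2, sub_self, mul_zero, if_neg (Nat.succ_ne_zero d)]

lemma integral_ff_div_prod (r : ℝ) (m n : ℕ) (hr : (n : ℝ) < r) :
    (∮ z in C(0, r), ff z m * (∏ k ∈ Finset.range (n+1), (z - (k:ℂ)))⁻¹)
      = if m = n then 2 * Real.pi * Complex.I else 0 := by
  have hr0 : (0:ℝ) < r := lt_of_le_of_lt (Nat.cast_nonneg n) hr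
  by_cases hmn : m ≤ n
  · -- rewrite integrand as (∏ Icc m n)⁻¹ on the sphere
    have heq : Set.EqOn (fun z : ℂ => ff z m * (∏ k ∈ Finset.range (n+1), (z - (k:ℂ)))⁻¹)
        (fun z : ℂ => (∏ k ∈ Finset.Icc m n, (z - (k:ℂ)))⁻¹) (Metric.sphere (0:ℂ) r) := by
      intro z hz
      have hsplit : ∏ k ∈ Finset.range (n+1), (z - (k:ℂ))
          = (ff z m) * ∏ k ∈ Finset.Icc m n, (z - (k:ℂ)) := by
        rw [ff, Finset.range_eq_Ico, Finset.range_eq_Ico, ← Finset.Ico_add_one_right_eq_Icc]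
        exact (Finset.prod_Ico_consecutive _ (Nat.zero_le m) (by omega)).symm
      have hffne : ff z m ≠ 0 := by
        rw [ff]
        apply Finset.prod_ne_zero_iff.mpr
        intro k hk
        have : (k:ℝ) < r := by
          have := Finset.mem_range.mp hk
          have : (k:ℝ) ≤ (n:ℝ) := by exact_mod_cast by omega
          linarith
        exact sphere_ne r hz this
      show ff z m * (∏ k ∈ Finset.range (n+1), (z - (k:ℂ)))⁻¹
          = (∏ k ∈ Finset.Icc m n, (z - (k:ℂ)))⁻¹
      rw [hsplit, mul_inv, ← mul_assoc, mul_inv_cancel₀ hffne, one_mul]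
    rw [circleIntegral.integral_congr hr0.le heq]
    rw [integral_inv_prod_Icc r (n - m) m n (by omega) hr]
    congr 1
    · simp only [eq_iff_iff]
      omega
  · -- m > n : integrand is an entire function on the sphere
    push_neg at hmn
    rw [if_neg (by omega)]
    have heq : Set.EqOn (fun z : ℂ => ff z m * (∏ k ∈ Finset.range (n+1), (z - (k:ℂ)))⁻¹)
        (fun z : ℂ => ∏ k ∈ Finset.Ico (n+1) m, (z - (k:ℂ))) (Metric.sphere (0:ℂ) r) := by
      intro z hz
      have hsplit : ff z m
          = (∏ k ∈ Finset.range (n+1), (z - (k:ℂ))) * ∏ k ∈ Finset.Ico (n+1) m, (z - (k:ℂ)) := by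
        rw [ff, Finset.range_eq_Ico, Finset.range_eq_Ico]
        exact (Finset.prod_Ico_consecutive _ (Nat.zero_le (n+1)) (show n + 1 ≤ m by omega)).symm
      have hpne : (∏ k ∈ Finset.range (n+1), (z - (k:ℂ))) ≠ 0 := by
        apply Finset.prod_ne_zero_iff.mpr
        intro k hk
        have : (k:ℝ) < r := by
          have := Finset.mem_range.mp hk
          have : (k:ℝ) ≤ (n:ℝ) := by exact_mod_cast by omega
          linarith
        exact sphere_ne r hz this
      show ff z m * (∏ k ∈ Finset.range (n+1), (z - (k:ℂ)))⁻¹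
          = ∏ k ∈ Finset.Ico (n+1) m, (z - (k:ℂ))
      rw [hsplit, mul_comm (∏ k ∈ Finset.range (n+1), (z - (k:ℂ))), mul_assoc,
        mul_inv_cancel₀ hpne, mul_one]
    rw [circleIntegral.integral_congr hr0.le heq]
    apply Complex.circleIntegral_eq_zero_of_differentiable_on_off_countable hr0.le
      Set.countable_empty
    · apply Continuous.continuousOn
      fun_prop
    · intro z _
      exact DifferentiableAt.fun_finsetProd (fun k _ => (differentiable_id.sub_const _).differentiableAt)

lemma norm_le_maxMod {f : ℂ → ℂ} (hc : Continuous f) {z : ℂ} {r : ℝ} (hz : ‖z‖ ≤ r) :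
    ‖f z‖ ≤ maxMod f r :=
  le_csSup ((isCompact_closedBall (0:ℂ) r).bddAbove_image (hc.norm.continuousOn))
    (Set.mem_image_of_mem _ (by simpa [Metric.mem_closedBall, dist_eq_norm] using hz))

lemma maxMod_nonneg {f : ℂ → ℂ} (hc : Continuous f) {r : ℝ} (hr : 0 ≤ r) :
    0 ≤ maxMod f r :=
  le_trans (norm_nonneg (f 0)) (norm_le_maxMod hc (by simpa using hr))

-- norm of the inverse product on the sphere
lemma norm_inv_prod_le {r : ℝ} (n : ℕ) (hr : (n:ℝ) < r) {z : ℂ} (hz : z ∈ Metric.sphere (0:ℂ) r) :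
    ‖(∏ k ∈ Finset.range (n+1), (z - (k:ℂ)))⁻¹‖ ≤ ((r - n) ^ (n+1))⁻¹ := by
  have hz' : ‖z‖ = r := mem_sphere_zero_iff_norm.mp hz
  have hpos : (0:ℝ) < (r - n) ^ (n+1) := by
    have : (0:ℝ) < r - n := by linarith
    positivity
  rw [norm_inv, norm_prod]
  apply inv_anti₀ hpos
  calc (r - (n:ℝ)) ^ (n+1) = ∏ _k ∈ Finset.range (n+1), (r - (n:ℝ)) := by
        rw [Finset.prod_const, Finset.card_range]
    _ ≤ ∏ k ∈ Finset.range (n+1), (r - (k:ℝ)) := by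
        apply Finset.prod_le_prod (fun k _ => by linarith)
        intro k hk
        have : (k:ℝ) ≤ (n:ℝ) := by exact_mod_cast Nat.lt_succ_iff.mp (Finset.mem_range.mp hk)
        linarith
    _ ≤ ∏ k ∈ Finset.range (n+1), ‖z - (k:ℂ)‖ := by
        apply Finset.prod_le_prod
        · intro k hk
          have : (k:ℝ) ≤ (n:ℝ) := by exact_mod_cast Nat.lt_succ_iff.mp (Finset.mem_range.mp hk)
          linarith
        · intro k hk
          have hk' : (k:ℝ) ≤ (n:ℝ) := by exact_mod_cast Nat.lt_succ_iff.mp (Finset.mem_range.mp hk)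
          calc r - (k:ℝ) = ‖z‖ - ‖(k:ℂ)‖ := by rw [hz', Complex.norm_natCast]
            _ ≤ ‖z - (k:ℂ)‖ := norm_sub_norm_le _ _

lemma coeff_repr (a : ℕ → ℂ) (f : ℂ → ℂ)
    (hf : ∀ z : ℂ, HasSum (fun n => a n * ff z n) (f z)) (n : ℕ) {r : ℝ} (hr : (n:ℝ) < r) :
    a n * (2 * Real.pi * Complex.I)
      = ∮ z in C(0, r), f z * (∏ k ∈ Finset.range (n+1), (z - (k:ℂ)))⁻¹ := by
  have hr0 : (0:ℝ) < r := lt_of_le_of_lt (Nat.cast_nonneg n) hr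
  set w : ℂ → ℂ := fun z => (∏ k ∈ Finset.range (n+1), (z - (k:ℂ)))⁻¹ with hw
  set B : ℝ := (∏ k ∈ Finset.range (n+1), (r - (k:ℝ)))⁻¹ with hB
  have hBpos : 0 < ∏ k ∈ Finset.range (n+1), (r - (k:ℝ)) := by
    apply Finset.prod_pos
    intro k hk
    have : (k:ℝ) ≤ (n:ℝ) := by exact_mod_cast Nat.lt_succ_iff.mp (Finset.mem_range.mp hk)
    linarith
  have hWb : ∀ z ∈ Metric.sphere (0:ℂ) r, ‖w z‖ ≤ B := by
    intro z hz
    have hz' : ‖z‖ = r := mem_sphere_zero_iff_norm.mp hz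
    rw [hw, hB]
    simp only
    rw [norm_inv, norm_prod]
    apply inv_anti₀ hBpos
    apply Finset.prod_le_prod
    · intro k hk
      have : (k:ℝ) ≤ (n:ℝ) := by exact_mod_cast Nat.lt_succ_iff.mp (Finset.mem_range.mp hk)
      linarith
    · intro k hk
      calc r - (k:ℝ) = ‖z‖ - ‖(k:ℂ)‖ := by rw [hz', Complex.norm_natCast]
        _ ≤ ‖z - (k:ℂ)‖ := norm_sub_norm_le _ _
  have hwz : ∀ θ : ℝ, w (circleMap 0 r θ) ≠ 0 ∧ circleMap 0 r θ ∈ Metric.sphere (0:ℂ) r := by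
    intro θ
    exact ⟨by
      rw [hw]
      simp only
      apply inv_ne_zero
      apply Finset.prod_ne_zero_iff.mpr
      intro k hk
      have : (k:ℝ) ≤ (n:ℝ) := by exact_mod_cast Nat.lt_succ_iff.mp (Finset.mem_range.mp hk)
      exact sphere_ne r (circleMap_mem_sphere _ hr0.le θ) (by linarith),
      circleMap_mem_sphere _ hr0.le θ⟩
  -- continuity of w ∘ circleMap
  have hwc : Continuous (fun θ : ℝ => w (circleMap 0 r θ)) := by
    rw [hw]
    apply Continuous.inv₀
    · fun_prop
    · intro θ
      apply Finset.prod_ne_zero_iff.mpr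
      intro k hk
      have : (k:ℝ) ≤ (n:ℝ) := by exact_mod_cast Nat.lt_succ_iff.mp (Finset.mem_range.mp hk)
      exact sphere_ne r (circleMap_mem_sphere _ hr0.le θ) (by linarith)
  set F : ℕ → ℝ → ℂ := fun m θ =>
    deriv (circleMap 0 r) θ • (a m * ff (circleMap 0 r θ) m * w (circleMap 0 r θ)) with hF
  have hFc : ∀ m, Continuous (F m) := by
    intro m
    rw [hF]
    simp only [deriv_circleMap]
    apply Continuous.fun_smul
    · fun_prop
    · apply Continuous.mul
      · apply Continuous.mul continuous_const
        unfold ff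
        fun_prop
      · exact hwc
  have hInt : ∀ m, Integrable (F m) (volume.restrict (Set.Ioc (0:ℝ) (2*Real.pi))) :=
    fun m => (hFc m).integrableOn_Ioc
  have hFbound : ∀ m θ, ‖F m θ‖ ≤ r * (‖a m‖ * ∏ k ∈ Finset.range m, (r + k)) * B := by
    intro m θ
    rw [hF]
    simp only [norm_smul, deriv_circleMap, norm_mul, Complex.norm_I, mul_one]
    have h1 : ‖circleMap 0 r θ‖ = r := by
      simp [norm_circleMap_zero, abs_of_pos hr0]
    rw [h1]
    have h2 : ‖ff (circleMap 0 r θ) m‖ ≤ ∏ k ∈ Finset.range m, (r + k) :=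
      norm_ff_le (by simp [abs_of_pos hr0]) m
    have h3 : ‖w (circleMap 0 r θ)‖ ≤ B := hWb _ (circleMap_mem_sphere _ hr0.le θ)
    have hBnn : (0:ℝ) ≤ B := le_of_lt (by rw [hB]; positivity)
    calc r * (‖a m‖ * ‖ff (circleMap 0 r θ) m‖ * ‖w (circleMap 0 r θ)‖)
        ≤ r * ((‖a m‖ * ∏ k ∈ Finset.range m, (r + k)) * B) := by
          apply mul_le_mul_of_nonneg_left _ hr0.le
          apply mul_le_mul (mul_le_mul_of_nonneg_left h2 (norm_nonneg _)) h3 (norm_nonneg _)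
          positivity
      _ = r * (‖a m‖ * ∏ k ∈ Finset.range m, (r + k)) * B := by ring
  have hbound : ∀ m, (∫ θ in Set.Ioc (0:ℝ) (2*Real.pi), ‖F m θ‖)
      ≤ 2 * Real.pi * r * B * (‖a m‖ * ∏ k ∈ Finset.range m, (r + k)) := by
    intro m
    calc ∫ θ in Set.Ioc (0:ℝ) (2*Real.pi), ‖F m θ‖
        ≤ ∫ _θ in Set.Ioc (0:ℝ) (2*Real.pi),
            (r * (‖a m‖ * ∏ k ∈ Finset.range m, (r + k)) * B) := by
          apply setIntegral_mono_on (hInt m).norm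
            (integrableOn_const (by rw [Real.volume_Ioc]; exact ENNReal.ofReal_ne_top))
            measurableSet_Ioc
          intro θ _
          exact hFbound m θ
      _ = (2 * Real.pi) * (r * (‖a m‖ * ∏ k ∈ Finset.range m, (r + k)) * B) := by
          rw [setIntegral_const, smul_eq_mul, Real.volume_real_Ioc,
            sub_zero, max_eq_left (by nlinarith [Real.pi_pos])]
      _ = 2 * Real.pi * r * B * (‖a m‖ * ∏ k ∈ Finset.range m, (r + k)) := by ring
  have hNormInt : Summable (fun m => ∫ θ in Set.Ioc (0:ℝ) (2*Real.pi), ‖F m θ‖) := by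
    apply Summable.of_nonneg_of_le (fun m => integral_nonneg fun θ => norm_nonneg _) hbound
    exact ((summable_coeff a f hf hr0).mul_left (2 * Real.pi * r * B)).congr (fun m => by ring)
  have hHS := MeasureTheory.hasSum_integral_of_summable_integral_norm hInt hNormInt
  -- identify the sum of the integrands
  have htsum : ∀ θ : ℝ, (∑' m, F m θ)
      = deriv (circleMap 0 r) θ • (f (circleMap 0 r θ) * w (circleMap 0 r θ)) := by
    intro θ
    apply HasSum.tsum_eq
    exact ((hf (circleMap 0 r θ)).mul_right _).const_smul _
  rw [funext htsum] at hHS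
  -- identify each integral
  have hint_eq : ∀ m, (∫ θ in Set.Ioc (0:ℝ) (2*Real.pi), F m θ)
      = if m = n then a n * (2 * Real.pi * Complex.I) else 0 := by
    intro m
    have : (∫ θ in Set.Ioc (0:ℝ) (2*Real.pi), F m θ)
        = ∮ z in C(0, r), a m * ff z m * w z := by
      rw [circleIntegral]
      rw [intervalIntegral.integral_of_le (by positivity)]
    rw [this]
    have : (∮ z in C(0, r), a m * ff z m * w z)
        = a m * ∮ z in C(0, r), ff z m * w z := by
      simp_rw [mul_assoc]
      exact circleIntegral.integral_const_mul _ _ _ _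
    rw [this, hw]
    rw [integral_ff_div_prod r m n hr]
    by_cases hmn : m = n
    · subst hmn; simp
    · simp [hmn]
  rw [funext hint_eq] at hHS
  have h2 : (∫ θ in Set.Ioc (0:ℝ) (2*Real.pi),
      deriv (circleMap 0 r) θ • (f (circleMap 0 r θ) * w (circleMap 0 r θ)))
      = ∮ z in C(0, r), f z * w z := by
    rw [circleIntegral, intervalIntegral.integral_of_le (by positivity)]
  rw [h2] at hHS
  exact (hasSum_ite_eq n (a n * (2 * Real.pi * Complex.I))).unique hHS

lemma coeff_bound (a : ℕ → ℂ) (f : ℂ → ℂ)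
    (hf : ∀ z : ℂ, HasSum (fun n => a n * ff z n) (f z)) (hc : Continuous f)
    (n : ℕ) {r : ℝ} (hr : (n:ℝ) < r) :
    ‖a n‖ ≤ r * maxMod f r / (r - n) ^ (n+1) := by
  have hr0 : (0:ℝ) < r := lt_of_le_of_lt (Nat.cast_nonneg n) hr
  have hrn : (0:ℝ) < r - n := by linarith
  have hMnn : 0 ≤ maxMod f r := maxMod_nonneg hc hr0.le
  have key : ∀ z ∈ Metric.sphere (0:ℂ) r,
      ‖f z * (∏ k ∈ Finset.range (n+1), (z - (k:ℂ)))⁻¹‖ ≤ maxMod f r / (r - n) ^ (n+1) := by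
    intro z hz
    have hz' : ‖z‖ = r := mem_sphere_zero_iff_norm.mp hz
    rw [norm_mul]
    calc ‖f z‖ * ‖(∏ k ∈ Finset.range (n+1), (z - (k:ℂ)))⁻¹‖
        ≤ maxMod f r * ((r - n) ^ (n+1))⁻¹ :=
          mul_le_mul (norm_le_maxMod hc (le_of_eq hz')) (norm_inv_prod_le n hr hz)
            (norm_nonneg _) hMnn
      _ = maxMod f r / (r - n) ^ (n+1) := by rw [div_eq_mul_inv]
  have h1 := circleIntegral.norm_integral_le_of_norm_le_const hr0.le key
  rw [← coeff_repr a f hf n hr] at h1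
  rw [norm_mul] at h1
  have h2 : ‖2 * (Real.pi:ℂ) * Complex.I‖ = 2 * Real.pi := by
    rw [norm_mul, norm_mul, Complex.norm_I, mul_one]
    norm_num [Complex.norm_real, Real.norm_eq_abs, abs_of_nonneg Real.pi_nonneg]
  rw [h2] at h1
  have hpi : 0 < 2 * Real.pi := by positivity
  have h1' : ‖a n‖ * (2 * Real.pi) ≤ 2 * Real.pi * r * (maxMod f r / (r - n) ^ (n+1)) := h1
  calc ‖a n‖ = ‖a n‖ * (2 * Real.pi) / (2 * Real.pi) := by field_simp
    _ ≤ 2 * Real.pi * r * (maxMod f r / (r - n) ^ (n+1)) / (2 * Real.pi) :=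
        (div_le_div_iff_of_pos_right hpi).mpr h1'
    _ = r * maxMod f r / (r - n) ^ (n+1) := by field_simp

lemma key_estimate (a : ℕ → ℂ) (f : ℂ → ℂ) (ρ : ℝ)
    (hf : ∀ z : ℂ, HasSum (fun n => a n * ff z n) (f z)) (hc : Continuous f)
    (hρ0 : 0 < ρ) (hρ1 : ρ < 1) (t : ℝ) (ht : 0 < t)
    (hM : ∀ᶠ r in atTop, Real.log (maxMod f r) ≤ t * r ^ ρ) :
    Filter.limsup (fun n : ℕ => (((n : ℝ) * ‖a n‖ ^ (ρ / (n : ℝ)) : ℝ) : EReal)) Filter.atTop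
      ≤ ((Real.exp 1 * ρ * t : ℝ) : EReal) := by
  set c : ℝ := ρ * t with hcdef
  have hc0 : 0 < c := by positivity
  set rr : ℕ → ℝ := fun n => ((n:ℝ)/c) ^ (1/ρ) with hrr
  set q : ℕ → ℝ := fun n => (n:ℝ) / rr n with hq
  set b : ℕ → ℝ := fun n =>
    Real.exp (1 + Real.log c - ρ * (1 + 1/(n:ℝ)) * Real.log (1 - q n)) with hb
  have hinv1 : (1:ℝ) < 1/ρ := by
    rw [lt_div_iff₀ hρ0]; linarith
  have hrr_tendsto : Tendsto rr atTop atTop := by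
    apply (tendsto_rpow_atTop (by positivity : (0:ℝ) < 1/ρ)).comp
    exact (tendsto_natCast_atTop_atTop).atTop_div_const hc0
  have hq_eq : ∀ᶠ n : ℕ in atTop, q n = ((n:ℝ) ^ (-(1/ρ - 1))) * c ^ (1/ρ) := by
    filter_upwards [eventually_ge_atTop 1] with n hn
    have hn0 : (0:ℝ) < (n:ℝ) := by exact_mod_cast hn
    have hnr : (0:ℝ) < (n:ℝ) ^ (1/ρ) := Real.rpow_pos_of_pos hn0 _
    rw [hq, hrr]
    simp only
    rw [Real.div_rpow hn0.le hc0.le, div_div_eq_mul_div,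
      show -(1/ρ - 1) = 1 - 1/ρ by ring, Real.rpow_sub hn0, Real.rpow_one,
      mul_div_right_comm]
  have hq_tendsto : Tendsto q atTop (nhds 0) := by
    apply Tendsto.congr' (hq_eq.mono (fun n h => h.symm))
    have h1 : Tendsto (fun n : ℕ => ((n:ℝ) ^ (-(1/ρ - 1)))) atTop (nhds 0) :=
      (tendsto_rpow_neg_atTop (by linarith)).comp tendsto_natCast_atTop_atTop
    simpa using h1.mul_const (c ^ (1/ρ))
  have hL_tendsto : Tendsto
      (fun n : ℕ => 1 + Real.log c - ρ * (1 + 1/(n:ℝ)) * Real.log (1 - q n)) atTop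
      (nhds (1 + Real.log c)) := by
    have hlog : Tendsto (fun n : ℕ => Real.log (1 - q n)) atTop (nhds 0) := by
      have h1 : Tendsto (fun n : ℕ => 1 - q n) atTop (nhds 1) := by
        simpa using (tendsto_const_nhds.sub hq_tendsto)
      have := (Real.continuousAt_log one_ne_zero).tendsto.comp h1
      simpa [Real.log_one, Function.comp_def] using this
    have hone : Tendsto (fun n : ℕ => ρ * (1 + 1/(n:ℝ))) atTop (nhds (ρ * (1 + 0))) :=
      tendsto_const_nhds.mul (tendsto_const_nhds.add tendsto_one_div_atTop_nhds_zero_nat)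
    have := (hone.mul hlog)
    have h2 : Tendsto (fun n : ℕ => ρ * (1 + 1/(n:ℝ)) * Real.log (1 - q n)) atTop (nhds 0) := by
      simpa using this
    simpa using tendsto_const_nhds.sub h2
  have hb_tendsto : Tendsto b atTop (nhds (Real.exp 1 * ρ * t)) := by
    have := (Real.continuous_exp.tendsto _).comp hL_tendsto
    have heq : Real.exp (1 + Real.log c) = Real.exp 1 * ρ * t := by
      rw [Real.exp_add, Real.exp_log hc0, hcdef, mul_assoc]
    rw [hb]
    simpa [heq, Function.comp_def] using this
  -- the eventual inequality
  obtain ⟨R₀, hR₀⟩ := eventually_atTop.mp hM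
  have hub : ∀ᶠ n : ℕ in atTop, (n:ℝ) * ‖a n‖ ^ (ρ / (n:ℝ)) ≤ b n := by
    filter_upwards [eventually_ge_atTop 1,
      hq_tendsto.eventually_lt_const (by norm_num : (0:ℝ) < 1/2),
      hrr_tendsto.eventually (eventually_ge_atTop (max R₀ 1))] with n hn1 hqn hrn
    have hn0 : (0:ℝ) < (n:ℝ) := by exact_mod_cast hn1
    have hrpos : (0:ℝ) < rr n := lt_of_lt_of_le one_pos (le_trans (le_max_right _ _) hrn)
    have hqpos : 0 < q n := div_pos hn0 hrpos
    have hnltr : (n:ℝ) < rr n := by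
      have : q n < 1 := lt_trans hqn (by norm_num)
      rw [hq] at this
      simp only at this
      calc (n:ℝ) = (n:ℝ)/rr n * rr n := by field_simp
        _ < 1 * rr n := by exact mul_lt_mul_of_pos_right this hrpos
        _ = rr n := one_mul _
    have hrn_sub : 0 < rr n - n := by linarith
    have hMr : Real.log (maxMod f (rr n)) ≤ t * (rr n) ^ ρ :=
      hR₀ (rr n) (le_trans (le_max_left _ _) hrn)
    have hMexp : maxMod f (rr n) ≤ Real.exp (t * (rr n) ^ ρ) := by
      rcases eq_or_lt_of_le (maxMod_nonneg hc hrpos.le) with h0 | h0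
      · rw [← h0]; positivity
      · calc maxMod f (rr n) = Real.exp (Real.log (maxMod f (rr n))) := (Real.exp_log h0).symm
          _ ≤ Real.exp (t * (rr n) ^ ρ) := Real.exp_le_exp.mpr hMr
    set B : ℝ := rr n * Real.exp (t * (rr n) ^ ρ) / (rr n - n) ^ (n+1) with hB
    have hBpos : 0 < B := by rw [hB]; positivity
    have haB : ‖a n‖ ≤ B := by
      calc ‖a n‖ ≤ rr n * maxMod f (rr n) / (rr n - n) ^ (n+1) :=
            coeff_bound a f hf hc n hnltr
        _ ≤ B := by
            rw [hB]
            exact (div_le_div_iff_of_pos_right (by positivity)).mpr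
              (mul_le_mul_of_nonneg_left hMexp hrpos.le)
    have hstep : (n:ℝ) * ‖a n‖ ^ (ρ / (n:ℝ)) ≤ (n:ℝ) * B ^ (ρ / (n:ℝ)) := by
      apply mul_le_mul_of_nonneg_left _ hn0.le
      exact Real.rpow_le_rpow (norm_nonneg _) haB (by positivity)
    refine le_trans hstep (le_of_eq ?_)
    -- now show n * B ^ (ρ/n) = b n
    have hrrρ : (rr n) ^ ρ = (n:ℝ)/c := by
      rw [hrr]
      simp only
      rw [← Real.rpow_mul (by positivity), one_div_mul_cancel (ne_of_gt hρ0), Real.rpow_one]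
    have hlogr : Real.log (rr n) = (1/ρ) * Real.log ((n:ℝ)/c) := by
      rw [hrr]
      simp only
      exact Real.log_rpow (by positivity) _
    have hq1 : (1:ℝ) - q n ≠ 0 := by
      have : q n < 1 := lt_trans hqn (by norm_num)
      intro h; rw [sub_eq_zero] at h; rw [← h] at this; exact lt_irrefl _ this
    have hsub_eq : rr n - n = rr n * (1 - q n) := by
      rw [hq]
      field_simp
    have hlogsub : Real.log (rr n - n) = Real.log (rr n) + Real.log (1 - q n) := by
      rw [hsub_eq, Real.log_mul (ne_of_gt hrpos) hq1]
    have hlogB : Real.log B = Real.log (rr n) + t * ((n:ℝ)/c)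
        - (n+1) * Real.log (rr n - n) := by
      rw [hB, Real.log_div (by positivity) (by positivity), Real.log_mul (ne_of_gt hrpos)
        (ne_of_gt (Real.exp_pos _)), Real.log_exp, Real.log_pow, hrrρ]
      push_cast
      ring
    have hBval : B ^ (ρ / (n:ℝ)) = Real.exp ((ρ / (n:ℝ)) * Real.log B) := by
      rw [Real.rpow_def_of_pos hBpos, mul_comm]
    have hlognc : Real.log ((n:ℝ)/c) = Real.log n - Real.log c :=
      Real.log_div (ne_of_gt hn0) (ne_of_gt hc0)
    have hρne : ρ ≠ 0 := ne_of_gt hρ0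
    have htne : t ≠ 0 := ne_of_gt ht
    have hnne : (n:ℝ) ≠ 0 := ne_of_gt hn0
    have hexps : Real.log n + (ρ / (n:ℝ)) * Real.log B
        = 1 + Real.log c - ρ * (1 + 1/(n:ℝ)) * Real.log (1 - q n) := by
      rw [hlogB, hlogsub, hlogr, hlognc, hcdef]
      field_simp
      ring
    calc (n:ℝ) * B ^ (ρ / (n:ℝ))
        = Real.exp (Real.log n) * Real.exp ((ρ / (n:ℝ)) * Real.log B) := by
          rw [Real.exp_log hn0, ← hBval]
      _ = Real.exp (Real.log n + (ρ / (n:ℝ)) * Real.log B) := (Real.exp_add _ _).symm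
      _ = b n := by rw [hexps, hb]
  -- conclude via limsup comparison
  have hev : (fun n : ℕ => (((n : ℝ) * ‖a n‖ ^ (ρ / (n : ℝ)) : ℝ) : EReal)) ≤ᶠ[atTop]
      (fun n : ℕ => ((b n : ℝ) : EReal)) := by
    filter_upwards [hub] with n hn
    exact EReal.coe_le_coe_iff.mpr hn
  have hcoe := Filter.limsup_le_limsup hev
  refine le_trans hcoe (le_of_eq ?_)
  exact (EReal.tendsto_coe.mpr hb_tendsto).limsup_eq

theorem binomial_series_type_lower (a : ℕ → ℂ) (f : ℂ → ℂ) (ρ : ℝ)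
    (ha0 : Filter.Tendsto (fun n => ‖a n‖) Filter.atTop (nhds 0))
    (haχ : chi a < 1)
    (hf : ∀ z : ℂ, HasSum (fun n => a n * ff z n) (f z))
    (hdiff : Differentiable ℂ f)
    (hρ : growthOrder f = ρ) (hρ0 : 0 < ρ) (hρ1 : ρ < 1) :
    Filter.limsup (fun n : ℕ => (((n : ℝ) * ‖a n‖ ^ (ρ / (n : ℝ)) : ℝ) : EReal))
        Filter.atTop ≤ ((Real.exp 1 * ρ : ℝ) : EReal) * growthTypeE f ρ := by
  have hc : Continuous f := hdiff.continuous
  have hMof : ∀ t : ℝ, growthTypeE f ρ < (t:EReal) →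
      ∀ᶠ r in atTop, Real.log (maxMod f r) ≤ t * r ^ ρ := by
    intro t hTt
    have h1 : ∀ᶠ r in atTop, ((Real.log (maxMod f r) / r ^ ρ : ℝ) : EReal) < (t : EReal) :=
      eventually_lt_of_limsup_lt hTt
    filter_upwards [h1, eventually_ge_atTop (1:ℝ)] with r hr hr1
    have hrρ : 0 < r ^ ρ := Real.rpow_pos_of_pos (by linarith) _
    have h2 : Real.log (maxMod f r) / r ^ ρ < t := EReal.coe_lt_coe_iff.mp hr
    exact le_of_lt ((div_lt_iff₀ hrρ).mp h2)
  by_cases hTtop : growthTypeE f ρ = ⊤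
  · rw [hTtop, EReal.coe_mul_top_of_pos (by positivity)]
    exact le_top
  have hT0 : (0:EReal) ≤ growthTypeE f ρ := by
    by_contra hneg
    push_neg at hneg
    have hneg' : growthTypeE f ρ < ((0:ℝ):EReal) := by exact_mod_cast hneg
    obtain ⟨t, hTt, ht0⟩ := EReal.lt_iff_exists_real_btwn.mp hneg'
    have ht0' : t < 0 := by exact_mod_cast ht0
    have hM := hMof t hTt
    have hMexp : ∀ r : ℝ, 0 ≤ r → Real.log (maxMod f r) ≤ t * r ^ ρ →
        maxMod f r ≤ Real.exp (t * r ^ ρ) := by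
      intro r hr hlog
      rcases eq_or_lt_of_le (maxMod_nonneg hc hr) with h0 | h0
      · rw [← h0]; positivity
      · calc maxMod f r = Real.exp (Real.log (maxMod f r)) := (Real.exp_log h0).symm
          _ ≤ _ := Real.exp_le_exp.mpr hlog
    obtain ⟨R₁, hR₁⟩ := eventually_atTop.mp hM
    set R₂ : ℝ := max R₁ 1 with hR₂
    have hb1 : ∀ z : ℂ, ‖f z‖ ≤ 1 := by
      intro z
      set r : ℝ := max ‖z‖ R₂ with hrdef
      have hr2 : R₂ ≤ r := le_max_right _ _
      have hr1 : (1:ℝ) ≤ r := le_trans (le_max_right _ _) hr2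
      have h1 : ‖f z‖ ≤ maxMod f r := norm_le_maxMod hc (le_max_left _ _)
      have h2 : Real.log (maxMod f r) ≤ t * r ^ ρ :=
        hR₁ r (le_trans (le_max_left _ _) hr2)
      have h3 : t * r ^ ρ ≤ 0 :=
        mul_nonpos_of_nonpos_of_nonneg ht0'.le (Real.rpow_nonneg (by linarith) _)
      have h4 : maxMod f r ≤ 1 := by
        calc maxMod f r ≤ Real.exp (t * r ^ ρ) := hMexp r (by linarith) h2
          _ ≤ Real.exp 0 := Real.exp_le_exp.mpr h3
          _ = 1 := Real.exp_zero
      linarith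
    have hconst : ∀ z, f z = f 0 := fun z =>
      hdiff.apply_eq_apply_of_bounded
        (isBounded_iff_forall_norm_le.mpr ⟨1, by rintro x ⟨z, rfl⟩; exact hb1 z⟩) z 0
    have hf00 : f 0 = 0 := by
      have hle : ∀ᶠ r in atTop, ‖f 0‖ ≤ Real.exp (t * r ^ ρ) := by
        filter_upwards [hM, eventually_ge_atTop (1:ℝ)] with r hr hr1
        have h1 : ‖f 0‖ ≤ maxMod f r := norm_le_maxMod hc (by simp; linarith)
        exact le_trans h1 (hMexp r (by linarith) hr)
      have hexp0 : Tendsto (fun r:ℝ => Real.exp (t * r ^ ρ)) atTop (nhds 0) := by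
        apply Real.tendsto_exp_atBot.comp
        exact (tendsto_const_mul_atBot_of_neg ht0').mpr (tendsto_rpow_atTop hρ0)
      have h0 : ‖f 0‖ ≤ 0 := ge_of_tendsto hexp0 hle
      simpa using le_antisymm h0 (norm_nonneg _)
    have hzero : ∀ z, f z = 0 := fun z => (hconst z).trans hf00
    have hmm : ∀ r : ℝ, 0 ≤ r → maxMod f r = 0 := by
      intro r hr
      have himg : (fun z => ‖f z‖) '' Metric.closedBall (0:ℂ) r = {0} := by
        apply Set.eq_singleton_iff_nonempty_unique_mem.mpr
        constructor
        · exact ⟨‖f 0‖, Set.mem_image_of_mem _ (Metric.mem_closedBall_self hr)⟩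
        · rintro x ⟨z, _, rfl⟩
          simp [hzero z]
      rw [maxMod, himg, csSup_singleton]
    have hord : growthOrder f = 0 := by
      rw [growthOrder]
      have heq : (fun r : ℝ => Real.log (Real.log (maxMod f r)) / Real.log r)
          =ᶠ[atTop] (fun _ => (0:ℝ)) := by
        filter_upwards [eventually_ge_atTop (0:ℝ)] with r hr
        rw [hmm r hr, Real.log_zero, Real.log_zero, zero_div]
      rw [limsup_congr heq, limsup_const]
    rw [hord] at hρ
    exact absurd hρ.symm (ne_of_gt hρ0)
  have hTbot : growthTypeE f ρ ≠ ⊥ := by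
    intro h
    rw [h] at hT0
    exact absurd hT0 (by simp)
  set τ₀ : ℝ := (growthTypeE f ρ).toReal with hτ₀
  have hTeq : growthTypeE f ρ = (τ₀ : EReal) := (EReal.coe_toReal hTtop hTbot).symm
  have hτ₀0 : 0 ≤ τ₀ := by
    rw [hTeq] at hT0
    exact_mod_cast hT0
  have hkey : ∀ t : ℝ, τ₀ < t →
      Filter.limsup (fun n : ℕ => (((n : ℝ) * ‖a n‖ ^ (ρ / (n : ℝ)) : ℝ) : EReal)) Filter.atTop
        ≤ ((Real.exp 1 * ρ * t : ℝ) : EReal) := by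
    intro t htt
    have ht0 : 0 < t := lt_of_le_of_lt hτ₀0 htt
    apply key_estimate a f ρ hf hc hρ0 hρ1 t ht0
    apply hMof
    rw [hTeq]
    exact_mod_cast htt
  rw [hTeq, ← EReal.coe_mul]
  by_contra hcon
  push_neg at hcon
  obtain ⟨u, hu1, hu2⟩ := EReal.lt_iff_exists_real_btwn.mp hcon
  have hu1' : Real.exp 1 * ρ * τ₀ < u := by exact_mod_cast hu1
  have hpos : 0 < Real.exp 1 * ρ := by positivity
  have htτ : τ₀ < u / (Real.exp 1 * ρ) := by
    rw [lt_div_iff₀ hpos]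
    nlinarith
  have hk := hkey _ htτ
  have hequ : Real.exp 1 * ρ * (u / (Real.exp 1 * ρ)) = u := by field_simp
  rw [hequ] at hk
  exact absurd hu2 (not_lt.mpr hk)
end

section
/- Let (a_n) be a sequence of complex numbers with |a_n| → 0 and χ((a_n)) < 1, and let f(z) = Σ_{n=0}^∞ a_n z^{\underline{n}} be the entire function defined by the binomial series. Then for every n ∈ ℕ and every real r > n, |a_n| ≤ M(r,f)/((r−1)(r−2)⋯(r−n)); equivalently, |a_n|·r^n ≤ M(r,f)/∏_{k=1}^{n}(1 − k/r). -/
open Filter Finset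

open Polynomial

lemma coeff_eq_sum_aux (n : ℕ) (p : ℂ[X]) (hp : p.degree < ((n+1 : ℕ) : WithBot ℕ)) :
    p.coeff n = ∑ k ∈ Finset.range (n+1),
      (∏ j ∈ (Finset.range (n+1)).erase k, ((k:ℂ) - j)⁻¹) * Polynomial.eval (k:ℂ) p := by
  have hinj : Set.InjOn (fun m : ℕ => (m : ℂ)) (Finset.range (n+1)) :=
    fun a _ b _ h => Nat.cast_injective h
  have hP := Lagrange.eq_interpolate (v := fun m : ℕ => (m : ℂ)) hinj
    (by rwa [Finset.card_range])
  conv_lhs => rw [hP]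
  rw [Lagrange.interpolate_apply, Polynomial.finset_sum_coeff]
  refine Finset.sum_congr rfl fun k hk => ?_
  rw [Polynomial.coeff_C_mul, mul_comm]
  congr 1
  have hb : Lagrange.basis (Finset.range (n+1)) (fun m : ℕ => (m : ℂ)) k
      = Polynomial.C (∏ j ∈ (Finset.range (n+1)).erase k, ((k:ℂ) - j)⁻¹)
        * ∏ j ∈ (Finset.range (n+1)).erase k, (X - Polynomial.C (j:ℂ)) := by
    rw [Lagrange.basis]
    simp_rw [Lagrange.basisDivisor]
    rw [Finset.prod_mul_distrib, ← map_prod]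
  rw [hb, Polynomial.coeff_C_mul]
  have hmon : (∏ j ∈ (Finset.range (n+1)).erase k, (X - Polynomial.C (j:ℂ))).Monic :=
    monic_prod_of_monic _ _ fun j _ => monic_X_sub_C _
  have hdeg : (∏ j ∈ (Finset.range (n+1)).erase k, (X - Polynomial.C (j:ℂ))).natDegree = n := by
    rw [Polynomial.natDegree_prod_of_monic _ _ fun j _ => monic_X_sub_C _]
    simp only [Polynomial.natDegree_X_sub_C, Finset.sum_const, smul_eq_mul, mul_one,
      Finset.card_erase_of_mem hk, Finset.card_range, Nat.add_sub_cancel]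
  have h1 := hmon.coeff_natDegree
  rw [hdeg] at h1
  rw [h1, mul_one]

lemma delta_sum_aux (n j : ℕ) (hj : j ≤ n) :
    ∑ k ∈ Finset.range (n+1),
        (∏ i ∈ (Finset.range (n+1)).erase k, ((k:ℂ) - i)⁻¹) * ff k j
      = if j = n then 1 else 0 := by
  set p : ℂ[X] := ∏ i ∈ Finset.range j, (X - Polynomial.C (i:ℂ)) with hpdef
  have hmon : p.Monic := monic_prod_of_monic _ _ fun i _ => monic_X_sub_C _
  have hnd : p.natDegree = j := by
    rw [hpdef, Polynomial.natDegree_prod_of_monic _ _ fun i _ => monic_X_sub_C _]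
    simp only [Polynomial.natDegree_X_sub_C, Finset.sum_const, smul_eq_mul, mul_one,
      Finset.card_range]
  have hdeg : p.degree < ((n+1 : ℕ) : WithBot ℕ) := by
    rw [Polynomial.degree_eq_natDegree hmon.ne_zero, hnd]
    exact_mod_cast Nat.lt_succ_of_le hj
  have heval : ∀ k : ℕ, Polynomial.eval (k:ℂ) p = ff k j := by
    intro k
    rw [hpdef, Polynomial.eval_prod, ff]
    simp
  have hcoeff : p.coeff n = if j = n then 1 else 0 := by
    by_cases h : j = n
    · subst h
      have h1 := hmon.coeff_natDegree
      rw [hnd] at h1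
      simp [h1]
    · rw [Polynomial.coeff_eq_zero_of_natDegree_lt (by rw [hnd]; exact lt_of_le_of_ne hj h),
        if_neg h]
  rw [← hcoeff, coeff_eq_sum_aux n p hdeg]
  exact Finset.sum_congr rfl fun k _ => by rw [heval]

lemma circleIntegral_finset_sum {ι : Type*} (s : Finset ι) (g : ι → ℂ → ℂ) (c : ℂ) (R : ℝ)
    (h : ∀ i ∈ s, CircleIntegrable (g i) c R) :
    (∮ z in C(c, R), ∑ i ∈ s, g i z) = ∑ i ∈ s, ∮ z in C(c, R), g i z := by
  simp only [circleIntegral, Finset.smul_sum]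
  exact intervalIntegral.integral_finset_sum fun i hi => (h i hi).out

theorem binomial_series_coeff_bound (a : ℕ → ℂ) (f : ℂ → ℂ)
    (ha0 : Filter.Tendsto (fun n => ‖a n‖) Filter.atTop (nhds 0))
    (haχ : chi a < 1)
    (hf : ∀ z : ℂ, HasSum (fun n => a n * ff z n) (f z))
    (hdiff : Differentiable ℂ f) :
    ∀ (n : ℕ) (r : ℝ), (n : ℝ) < r →
      ‖a n‖ ≤ maxMod f r / ∏ k ∈ Finset.Icc 1 n, (r - (k : ℝ)) ∧
      ‖a n‖ * r ^ n ≤ maxMod f r / ∏ k ∈ Finset.Icc 1 n, (1 - (k : ℝ) / r) := by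
  intro n r hn
  have hr0 : (0:ℝ) < r := lt_of_le_of_lt (Nat.cast_nonneg n) hn
  set c : ℕ → ℂ := fun k => ∏ j ∈ (Finset.range (n+1)).erase k, ((k:ℂ) - j)⁻¹ with hc
  -- values of f at integers
  have hfk : ∀ k ∈ Finset.range (n+1), f (k:ℂ) = ∑ j ∈ Finset.range (n+1), a j * ff (k:ℂ) j := by
    intro k hk
    refine (hf (k:ℂ)).unique (hasSum_sum_of_ne_finset_zero fun j hj => ?_)
    have hkj : k < j := lt_of_lt_of_le (Finset.mem_range.mp hk) (Nat.not_lt.mp fun h =>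
      hj (Finset.mem_range.mpr h))
    have : ff (k:ℂ) j = 0 :=
      Finset.prod_eq_zero (Finset.mem_range.mpr hkj) (by simp)
    rw [this, mul_zero]
  -- divided difference representation of a n
  have han : a n = ∑ k ∈ Finset.range (n+1), c k * f (k:ℂ) := by
    calc a n = ∑ j ∈ Finset.range (n+1), a j * (if j = n then 1 else 0) := by
          simp
      _ = ∑ j ∈ Finset.range (n+1), a j *
            ∑ k ∈ Finset.range (n+1), c k * ff (k:ℂ) j := by
          refine Finset.sum_congr rfl fun j hj => ?_
          rw [delta_sum_aux n j (Nat.lt_succ_iff.mp (Finset.mem_range.mp hj))]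
      _ = ∑ k ∈ Finset.range (n+1), c k * ∑ j ∈ Finset.range (n+1), a j * ff (k:ℂ) j := by
          simp_rw [Finset.mul_sum]
          rw [Finset.sum_comm]
          exact Finset.sum_congr rfl fun k _ => Finset.sum_congr rfl fun j _ => by ring
      _ = ∑ k ∈ Finset.range (n+1), c k * f (k:ℂ) := by
          exact Finset.sum_congr rfl fun k hk => by rw [hfk k hk]
  -- points are off the circle
  have hz_ne : ∀ z ∈ Metric.sphere (0:ℂ) r, ∀ j ∈ Finset.range (n+1), z ≠ (j:ℂ) := by
    intro z hz j hj h
    have hzr : ‖z‖ = r := by rwa [mem_sphere_zero_iff_norm] at hz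
    have hjn : (j:ℝ) ≤ n := by exact_mod_cast Nat.lt_succ_iff.mp (Finset.mem_range.mp hj)
    rw [h] at hzr
    simp only [Complex.norm_natCast] at hzr
    linarith
  -- partial fractions on the circle
  have hpf : ∀ z ∈ Metric.sphere (0:ℂ) r,
      (∏ j ∈ Finset.range (n+1), (z - (j:ℂ)))⁻¹ * f z
        = ∑ k ∈ Finset.range (n+1), (c k * (z - (k:ℂ))⁻¹) * f z := by
    intro z hz
    have hzj : ∀ j ∈ Finset.range (n+1), z - (j:ℂ) ≠ 0 :=
      fun j hj => sub_ne_zero.2 (hz_ne z hz j hj)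
    have hS : ∑ k ∈ Finset.range (n+1), c k * (z - (k:ℂ))⁻¹
        = (∏ j ∈ Finset.range (n+1), (z - (j:ℂ)))⁻¹ := by
      have hinj : Set.InjOn (fun m : ℕ => (m : ℂ)) (Finset.range (n+1)) :=
        fun a _ b _ h => Nat.cast_injective h
      have hsb := Lagrange.sum_basis hinj ⟨0, by simp⟩
      have hev := congrArg (Polynomial.eval z) hsb
      rw [Polynomial.eval_finset_sum, Polynomial.eval_one] at hev
      have hone : (∑ k ∈ Finset.range (n+1), c k * (z - (k:ℂ))⁻¹)
          * ∏ j ∈ Finset.range (n+1), (z - (j:ℂ)) = 1 := by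
        rw [Finset.sum_mul, ← hev]
        refine Finset.sum_congr rfl fun k hk => ?_
        have hprod : (z - (k:ℂ)) * ∏ x ∈ (Finset.range (n+1)).erase k, (z - (x:ℂ))
            = ∏ x ∈ Finset.range (n+1), (z - (x:ℂ)) :=
          by simpa using Finset.mul_prod_erase (Finset.range (n+1)) (fun x : ℕ => z - (x:ℂ)) hk
        rw [Lagrange.basis]
        simp_rw [Lagrange.basisDivisor]
        rw [Polynomial.eval_prod]
        simp only [Polynomial.eval_mul, Polynomial.eval_C, Polynomial.eval_sub,
          Polynomial.eval_X]
        rw [Finset.prod_mul_distrib]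
        have hck : c k = ∏ x ∈ (Finset.range (n+1)).erase k, ((k:ℂ) - (x:ℂ))⁻¹ := rfl
        rw [hck, mul_assoc]
        congr 1
        rw [← hprod, inv_mul_cancel_left₀ (hzj k hk)]
      exact eq_inv_of_mul_eq_one_left hone
    rw [← Finset.sum_mul, hS]
  -- circle integrability
  have hci : ∀ k ∈ Finset.range (n+1),
      CircleIntegrable (fun z => (c k * (z - (k:ℂ))⁻¹) * f z) 0 r := by
    intro k hk
    refine ContinuousOn.circleIntegrable hr0.le ?_
    exact (continuousOn_const.mul ((continuousOn_id.sub continuousOn_const).inv₀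
      fun z hz => sub_ne_zero.2 (hz_ne z hz k hk))).mul hdiff.continuous.continuousOn
  -- Cauchy integral formula for each pole
  have heach : ∀ k ∈ Finset.range (n+1),
      (∮ z in C(0, r), (c k * (z - (k:ℂ))⁻¹) * f z)
        = c k * ((2 * Real.pi * Complex.I) * f (k:ℂ)) := by
    intro k hk
    have hball : (k:ℂ) ∈ Metric.ball (0:ℂ) r := by
      rw [mem_ball_zero_iff]
      simp only [Complex.norm_natCast]
      exact lt_of_le_of_lt (by exact_mod_cast Nat.lt_succ_iff.mp (Finset.mem_range.mp hk)) hn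
    have hcau := (hdiff.diffContOnCl (s := Metric.ball (0:ℂ) r)).circleIntegral_sub_inv_smul hball
    calc (∮ z in C(0, r), (c k * (z - (k:ℂ))⁻¹) * f z)
        = ∮ z in C(0, r), c k • ((z - (k:ℂ))⁻¹ • f z) := by
          simp only [smul_eq_mul, mul_assoc]
      _ = c k • ∮ z in C(0, r), (z - (k:ℂ))⁻¹ • f z := circleIntegral.integral_smul _ _ _ _
      _ = c k * ((2 * Real.pi * Complex.I) * f (k:ℂ)) := by
          rw [hcau]; simp [smul_eq_mul]
  -- the Cauchy integral representation of a n
  have hCauchy : (2 * Real.pi * Complex.I) * a n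
      = ∮ z in C(0, r), (∏ j ∈ Finset.range (n+1), (z - (j:ℂ)))⁻¹ * f z := by
    rw [circleIntegral.integral_congr hr0.le (fun z hz => hpf z hz),
      circleIntegral_finset_sum _ _ _ _ hci]
    calc (2 * Real.pi * Complex.I) * a n
        = ∑ k ∈ Finset.range (n+1), c k * ((2 * Real.pi * Complex.I) * f (k:ℂ)) := by
          rw [han, Finset.mul_sum]
          exact Finset.sum_congr rfl fun k _ => by ring
      _ = ∑ k ∈ Finset.range (n+1), ∮ z in C(0, r), (c k * (z - (k:ℂ))⁻¹) * f z :=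
          (Finset.sum_congr rfl fun k hk => (heach k hk).symm)
  -- positivity of the product
  have hQpos : (0:ℝ) < ∏ j ∈ Finset.range (n+1), (r - (j:ℝ)) := by
    refine Finset.prod_pos fun j hj => ?_
    have : (j:ℝ) ≤ n := by exact_mod_cast Nat.lt_succ_iff.mp (Finset.mem_range.mp hj)
    linarith
  -- maxMod bounds
  have hbdd : BddAbove ((fun z => ‖f z‖) '' Metric.closedBall (0:ℂ) r) :=
    ((isCompact_closedBall (0:ℂ) r).image
      (continuous_norm.comp hdiff.continuous)).bddAbove
  have hmem : ∀ z ∈ Metric.closedBall (0:ℂ) r, ‖f z‖ ≤ maxMod f r :=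
    fun z hz => le_csSup hbdd ⟨z, hz, rfl⟩
  have hM0 : 0 ≤ maxMod f r :=
    le_trans (norm_nonneg _) (hmem 0 (by simp [hr0.le]))
  -- bound on the circle
  have hbound : ∀ z ∈ Metric.sphere (0:ℂ) r,
      ‖(∏ j ∈ Finset.range (n+1), (z - (j:ℂ)))⁻¹ * f z‖
        ≤ maxMod f r / ∏ j ∈ Finset.range (n+1), (r - (j:ℝ)) := by
    intro z hz
    have hzr : ‖z‖ = r := by rwa [mem_sphere_zero_iff_norm] at hz
    have hfz : ‖f z‖ ≤ maxMod f r :=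
      hmem z (Metric.sphere_subset_closedBall hz)
    have hge : ∏ j ∈ Finset.range (n+1), (r - (j:ℝ))
        ≤ ∏ j ∈ Finset.range (n+1), ‖z - (j:ℂ)‖ := by
      refine Finset.prod_le_prod (fun j hj => ?_) (fun j hj => ?_)
      · have : (j:ℝ) ≤ n := by exact_mod_cast Nat.lt_succ_iff.mp (Finset.mem_range.mp hj)
        linarith
      · calc r - (j:ℝ) = ‖z‖ - ‖(j:ℂ)‖ := by rw [hzr]; simp
          _ ≤ ‖z - (j:ℂ)‖ := norm_sub_norm_le _ _
    rw [norm_mul, norm_inv, norm_prod]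
    calc (∏ j ∈ Finset.range (n+1), ‖z - (j:ℂ)‖)⁻¹ * ‖f z‖
        ≤ (∏ j ∈ Finset.range (n+1), (r - (j:ℝ)))⁻¹ * maxMod f r := by
          refine mul_le_mul ?_ hfz (norm_nonneg _) (inv_nonneg.2 hQpos.le)
          gcongr
      _ = maxMod f r / ∏ j ∈ Finset.range (n+1), (r - (j:ℝ)) := by
          rw [div_eq_mul_inv, mul_comm]
  -- main estimate
  have hA := circleIntegral.norm_integral_le_of_norm_le_const hr0.le hbound
  rw [← hCauchy, norm_mul] at hA
  have hnorm2pi : ‖(2 * (Real.pi:ℂ) * Complex.I : ℂ)‖ = 2 * Real.pi := by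
    simp [Real.pi_nonneg]
  rw [hnorm2pi] at hA
  set M := maxMod f r with hM
  set Q := ∏ j ∈ Finset.range (n+1), (r - (j:ℝ)) with hQ
  have key : ‖a n‖ ≤ r * (M / Q) := by
    have h2p : (0:ℝ) < 2 * Real.pi := Real.two_pi_pos
    refine le_of_mul_le_mul_left ?_ h2p
    calc 2 * Real.pi * ‖a n‖ ≤ 2 * Real.pi * r * (M / Q) := hA
      _ = 2 * Real.pi * (r * (M / Q)) := by ring
  set P := ∏ k ∈ Finset.Icc 1 n, (r - (k:ℝ)) with hP
  have hsplit : Q = r * P := by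
    have h1 : P = ∏ i ∈ Finset.range n, (r - ((i+1 : ℕ):ℝ)) := by
      rw [hP, ← Finset.Ico_add_one_right_eq_Icc, Finset.prod_Ico_eq_prod_range]
      refine Finset.prod_congr (by simp) fun i _ => by rw [add_comm]
    rw [hQ, Finset.prod_range_succ' (fun j : ℕ => (r - (j:ℝ))) n, h1]
    simp [mul_comm]
  have hPpos : (0:ℝ) < P := by
    refine Finset.prod_pos fun k hk => ?_
    have hkn : (k:ℝ) ≤ n := by exact_mod_cast (Finset.mem_Icc.mp hk).2
    linarith
  have first : ‖a n‖ ≤ M / P := by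
    calc ‖a n‖ ≤ r * (M / (r * P)) := by rw [← hsplit]; exact key
      _ = M / P := by field_simp
  refine ⟨first, ?_⟩
  have h2 : ∏ k ∈ Finset.Icc 1 n, (1 - (k:ℝ)/r) = P / r^n := by
    calc ∏ k ∈ Finset.Icc 1 n, (1 - (k:ℝ)/r)
        = ∏ k ∈ Finset.Icc 1 n, ((r - (k:ℝ))/r) :=
          Finset.prod_congr rfl fun k _ => by field_simp
      _ = P / ∏ _k ∈ Finset.Icc 1 n, r := Finset.prod_div_distrib _ _
      _ = P / r^n := by rw [Finset.prod_const, Nat.card_Icc]; simp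
  rw [h2, div_div_eq_mul_div]
  calc ‖a n‖ * r^n ≤ (M / P) * r^n :=
        mul_le_mul_of_nonneg_right first (pow_nonneg hr0.le n)
    _ = M * r^n / P := by ring
end

section
/- For every n ∈ ℕ with n ≥ 1 and every real r > 2n, r^n/((r−1)(r−2)⋯(r−n)) ≤ exp( n(n+1)/r + n(n+1)²/r² ). -/
open Finset

lemma aux_one_div_le_exp {s : ℝ} (h0 : 0 ≤ s) (h1 : s ≤ 1/2) :
    1 / (1 - s) ≤ Real.exp (s + s ^ 2) := by
  have h2 : 0 < 1 - s := by linarith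
  rw [div_le_iff₀ h2]
  have hq := Real.quadratic_le_exp_of_nonneg (by positivity : (0:ℝ) ≤ s + s ^ 2)
  nlinarith [sq_nonneg s, sq_nonneg (s + s^2), pow_nonneg h0 3]

theorem product_lower_bound (n : ℕ) (hn : 1 ≤ n) (r : ℝ) (hr : 2 * (n : ℝ) < r) :
    r ^ n / ∏ k ∈ Finset.Icc 1 n, (r - (k : ℝ)) ≤
      Real.exp ((n : ℝ) * ((n : ℝ) + 1) / r + (n : ℝ) * ((n : ℝ) + 1) ^ 2 / r ^ 2) := by
  have hn1 : (1:ℝ) ≤ (n:ℝ) := by exact_mod_cast hn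
  have hr0 : 0 < r := by linarith
  have hfac : ∀ k ∈ Finset.Icc 1 n, 0 < r - (k:ℝ) := by
    intro k hk
    have hk' : (k:ℝ) ≤ n := by exact_mod_cast (Finset.mem_Icc.mp hk).2
    linarith
  have hrw : r ^ n / ∏ k ∈ Finset.Icc 1 n, (r - (k:ℝ)) =
      ∏ k ∈ Finset.Icc 1 n, (r / (r - (k:ℝ))) := by
    rw [Finset.prod_div_distrib, Finset.prod_const, Nat.card_Icc]
    simp
  rw [hrw]
  have hstep : ∀ k ∈ Finset.Icc 1 n, r / (r - (k:ℝ)) ≤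
      Real.exp ((k:ℝ)/r + ((k:ℝ)/r) ^ 2) := by
    intro k hk
    have hk' : (k:ℝ) ≤ n := by exact_mod_cast (Finset.mem_Icc.mp hk).2
    have hs0 : 0 ≤ (k:ℝ)/r := by positivity
    have hs1 : (k:ℝ)/r ≤ 1/2 := by
      rw [div_le_div_iff₀ hr0 (by norm_num)]
      linarith
    have h2 : 0 < r - (k:ℝ) := hfac k hk
    have : r / (r - (k:ℝ)) = 1 / (1 - (k:ℝ)/r) := by
      field_simp
    rw [this]
    exact aux_one_div_le_exp hs0 hs1
  calc ∏ k ∈ Finset.Icc 1 n, (r / (r - (k:ℝ)))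
      ≤ ∏ k ∈ Finset.Icc 1 n, Real.exp ((k:ℝ)/r + ((k:ℝ)/r) ^ 2) := by
        apply Finset.prod_le_prod
        · intro k hk; exact (div_pos hr0 (hfac k hk)).le
        · exact hstep
    _ = Real.exp (∑ k ∈ Finset.Icc 1 n, ((k:ℝ)/r + ((k:ℝ)/r) ^ 2)) := by
        rw [Real.exp_sum]
    _ ≤ Real.exp ((n : ℝ) * ((n : ℝ) + 1) / r + (n : ℝ) * ((n : ℝ) + 1) ^ 2 / r ^ 2) := by
        apply Real.exp_le_exp.mpr
        calc ∑ k ∈ Finset.Icc 1 n, ((k:ℝ)/r + ((k:ℝ)/r) ^ 2)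
            ≤ ∑ _k ∈ Finset.Icc 1 n, ((n:ℝ)/r + ((n:ℝ)/r) ^ 2) := by
              apply Finset.sum_le_sum
              intro k hk
              have hk' : (k:ℝ) ≤ n := by exact_mod_cast (Finset.mem_Icc.mp hk).2
              have h1 : (k:ℝ)/r ≤ (n:ℝ)/r := by gcongr
              have h0 : 0 ≤ (k:ℝ)/r := by positivity
              have := pow_le_pow_left₀ h0 h1 2
              linarith
          _ = (n:ℝ) * ((n:ℝ)/r + ((n:ℝ)/r) ^ 2) := by
              rw [Finset.sum_const, Nat.card_Icc]
              simp [nsmul_eq_mul]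
              ring
          _ ≤ (n : ℝ) * ((n : ℝ) + 1) / r + (n : ℝ) * ((n : ℝ) + 1) ^ 2 / r ^ 2 := by
              have e : (n:ℝ)*((n:ℝ)/r + ((n:ℝ)/r)^2) =
                  (n:ℝ)*(n:ℝ)/r + (n:ℝ)*(n:ℝ)^2/r^2 := by
                field_simp
              rw [e]
              have hn0 : (0:ℝ) ≤ (n:ℝ) := by positivity
              gcongr <;> nlinarith
end

section
/- Let 0 < ρ < 1 be a real number. The binomial series f(z) = Σ_{n=0}^∞ ((log n)^ρ / n)^{n/ρ} · z^{\underline{n}} (with the n = 0 and n = 1 terms interpreted so that the coefficients tend to 0, e.g. a_0 = a_1 = 0) converges uniformly on every compact subset of ℂ, and the entire function f so defined has order of growth ρ(f) = ρ and maximum type, i.e. τ(f) = ∞. -/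
open Filter Finset

set_option maxHeartbeats 400000

noncomputable def bb (ρ : ℝ) (n : ℕ) : ℝ :=
  if n < 2 then 0 else (Real.log n ^ ρ / n) ^ ((n : ℝ) / ρ)

noncomputable def EE (ρ : ℝ) (n : ℕ) : ℝ :=
  (n : ℝ) * Real.log (Real.log n) - ((n : ℝ) / ρ) * Real.log n

lemma log_pos_of_two_le {n : ℕ} (hn : 2 ≤ n) : 0 < Real.log n := by
  apply Real.log_pos; exact_mod_cast one_lt_two.trans_le hn

lemma bb_nonneg (ρ : ℝ) (n : ℕ) : 0 ≤ bb ρ n := by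
  unfold bb; split
  · exact le_refl 0
  · rename_i h
    push_neg at h
    have hln : 0 < Real.log n := log_pos_of_two_le h
    have hn0 : (0:ℝ) < n := by exact_mod_cast Nat.lt_of_lt_of_le two_pos h
    positivity

lemma bb_eq_exp {ρ : ℝ} (hρ : 0 < ρ) {n : ℕ} (hn : 2 ≤ n) :
    bb ρ n = Real.exp (EE ρ n) := by
  have hln : 0 < Real.log n := log_pos_of_two_le hn
  have hn0 : (0:ℝ) < n := by positivity
  have hx : (0:ℝ) < Real.log n ^ ρ / n := by positivity
  rw [bb, if_neg (by omega)]
  rw [Real.rpow_def_of_pos hx, Real.log_div (by positivity) (by positivity),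
    Real.log_rpow hln, EE]
  congr 1
  field_simp

/-- `log log x ≤ δ log x - log δ` for `x > 1`, `δ > 0`. -/
lemma loglog_le {δ x : ℝ} (hδ : 0 < δ) (hx : 1 < x) :
    Real.log (Real.log x) ≤ δ * Real.log x - Real.log δ := by
  have hlx : 0 < Real.log x := Real.log_pos hx
  have h1 : Real.log (δ * Real.log x) ≤ δ * Real.log x - 1 :=
    Real.log_le_sub_one_of_pos (by positivity)
  rw [Real.log_mul (ne_of_gt hδ) (ne_of_gt hlx)] at h1
  linarith

lemma ff_norm_le {z : ℂ} {R : ℝ} (hz : ‖z‖ ≤ R) (hR : 0 ≤ R) (n : ℕ) :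
    ‖ff z n‖ ≤ (R + n) ^ n := by
  rw [ff, norm_prod]
  calc ∏ k ∈ Finset.range n, ‖z - (k : ℂ)‖
      ≤ ∏ k ∈ Finset.range n, (R + n) := by
        apply Finset.prod_le_prod (fun k _ => norm_nonneg _)
        intro k hk
        have hk' : (k : ℝ) ≤ n := by
          exact_mod_cast le_of_lt (Finset.mem_range.mp hk)
        calc ‖z - (k : ℂ)‖ ≤ ‖z‖ + ‖(k : ℂ)‖ := norm_sub_le _ _
          _ ≤ R + n := by
              simp only [Complex.norm_natCast]
              linarith
    _ = (R + n) ^ n := by rw [Finset.prod_const, Finset.card_range]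

/-- Eventually (in `n`), the term `bb n * (R+n)^n` is at most `(1/2)^n`. -/
lemma term_small {ρ : ℝ} (hρ0 : 0 < ρ) (hρ1 : ρ < 1) (R : ℝ) (hR : 0 ≤ R) :
    ∀ᶠ n : ℕ in atTop, bb ρ n * (R + n) ^ n ≤ (1/2 : ℝ) ^ n := by
  set δ : ℝ := 1/ρ - 1 with hδdef
  have hδ : 0 < δ := by
    have : 1 < 1/ρ := (one_lt_div hρ0).mpr hρ1
    rw [hδdef]; linarith
  -- eventual condition on n
  have hlim : Tendsto (fun n : ℕ => (δ/2) * Real.log n) atTop atTop := by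
    apply Tendsto.const_mul_atTop (by positivity)
    exact Real.tendsto_log_atTop.comp tendsto_natCast_atTop_atTop
  have hev : ∀ᶠ n : ℕ in atTop,
      (δ/2) * Real.log n ≥ -Real.log (δ/2) + Real.log (1 + R) + Real.log 2 := by
    exact hlim.eventually_ge_atTop _
  filter_upwards [hev, eventually_ge_atTop 2] with n hn h2
  have hln : 0 < Real.log n := log_pos_of_two_le h2
  have hn1 : (1:ℝ) < n := by exact_mod_cast h2.trans_lt' one_lt_two
  have hnR : (0:ℝ) < R + n := by positivity
  rw [bb_eq_exp hρ0 h2]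
  have hRn : (R + n : ℝ) ^ n = Real.exp (n * Real.log (R + n)) := by
    rw [Real.exp_nat_mul, Real.exp_log hnR]
  have h12 : ((1:ℝ)/2) ^ n = Real.exp (n * Real.log (1/2)) := by
    rw [Real.exp_nat_mul, Real.exp_log (by norm_num)]
  rw [hRn, h12, ← Real.exp_add, Real.exp_le_exp]
  -- key inequality
  have hll : Real.log (Real.log n) ≤ (δ/2) * Real.log n - Real.log (δ/2) :=
    loglog_le (by positivity) hn1
  have hlogRn : Real.log (R + n) ≤ Real.log (1 + R) + Real.log n := by
    rw [← Real.log_mul (by positivity) (by positivity)]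
    apply Real.log_le_log hnR
    nlinarith [hn1]
  have hEE : EE ρ n = (n:ℝ) * (Real.log (Real.log n) - (1 + δ) * Real.log n) := by
    rw [EE, hδdef]
    field_simp
    ring
  have hlog12 : Real.log (1/2 : ℝ) = -Real.log 2 := by
    rw [one_div, Real.log_inv]
  rw [hEE, hlog12]
  have hn0 : (0:ℝ) ≤ n := by positivity
  have key : Real.log (Real.log n) + Real.log (R + n) + Real.log 2
      ≤ (1 + δ) * Real.log n := by
    calc Real.log (Real.log n) + Real.log (R + n) + Real.log 2
        ≤ ((δ/2) * Real.log n - Real.log (δ/2)) + (Real.log (1+R) + Real.log n)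
            + Real.log 2 := by linarith
      _ ≤ (δ/2) * Real.log n + (δ/2) * Real.log n + Real.log n := by linarith
      _ = (1 + δ) * Real.log n := by ring
  nlinarith [key, hn0]

lemma summable_bound {ρ : ℝ} (hρ0 : 0 < ρ) (hρ1 : ρ < 1) (R : ℝ) (hR : 0 ≤ R) :
    Summable (fun n : ℕ => bb ρ n * (R + n) ^ n) := by
  obtain ⟨N, hN⟩ := (term_small hρ0 hρ1 R hR).exists_forall_of_atTop
  rw [← summable_nat_add_iff N]
  apply Summable.of_nonneg_of_le (fun n => ?_) (fun n => hN (n + N) (by omega))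
  · exact ((summable_geometric_of_lt_one (by norm_num) (by norm_num)).comp_injective
      (add_left_injective N))
  · have : (0:ℝ) ≤ R + (n + N : ℕ) := by positivity
    exact mul_nonneg (bb_nonneg ρ _) (pow_nonneg this _)

lemma bddAbove_image_norm {f : ℂ → ℂ} (hf : Continuous f) (r : ℝ) :
    BddAbove ((fun z => ‖f z‖) '' Metric.closedBall (0 : ℂ) r) :=
  ((isCompact_closedBall (0:ℂ) r).image (continuous_norm.comp hf)).bddAbove

lemma le_maxMod {f : ℂ → ℂ} (hf : Continuous f) {r : ℝ} {x : ℂ} (hx : ‖x‖ ≤ r) :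
    ‖f x‖ ≤ maxMod f r := by
  apply le_csSup (bddAbove_image_norm hf r)
  exact ⟨x, by simpa [Metric.mem_closedBall, Complex.dist_eq] using hx, rfl⟩

lemma maxMod_le {f : ℂ → ℂ} {r B : ℝ} (hB : 0 ≤ B)
    (h : ∀ x : ℂ, ‖x‖ ≤ r → ‖f x‖ ≤ B) : maxMod f r ≤ B := by
  apply Real.sSup_le _ hB
  rintro y ⟨x, hx, rfl⟩
  exact h x (by simpa [Metric.mem_closedBall, Complex.dist_eq] using hx)

lemma maxMod_mono {f : ℂ → ℂ} (hf : Continuous f) {r s : ℝ} (hr : 0 ≤ r)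
    (hrs : r ≤ s) : maxMod f r ≤ maxMod f s := by
  apply csSup_le_csSup (bddAbove_image_norm hf s)
  · exact ⟨‖f 0‖, ⟨0, by simp [hr], rfl⟩⟩
  · exact Set.image_mono (Metric.closedBall_subset_closedBall hrs)

section conv
variable {ρ : ℝ} {a : ℕ → ℂ}

lemma norm_term_le (hab : ∀ n : ℕ, a n = ((bb ρ n : ℝ) : ℂ)) {R : ℝ} (hR : 0 ≤ R)
    (n : ℕ) {z : ℂ} (hz : ‖z‖ ≤ R) : ‖a n * ff z n‖ ≤ bb ρ n * (R + n) ^ n := by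
  rw [hab, norm_mul, Complex.norm_real, Real.norm_eq_abs, abs_of_nonneg (bb_nonneg ρ n)]
  exact mul_le_mul_of_nonneg_left (ff_norm_le hz hR n) (bb_nonneg ρ n)

lemma tuo_ball (hρ0 : 0 < ρ) (hρ1 : ρ < 1) (hab : ∀ n : ℕ, a n = ((bb ρ n : ℝ) : ℂ)) {R : ℝ} (hR : 0 ≤ R) :
    TendstoUniformlyOn (fun N z => ∑ n ∈ Finset.range N, a n * ff z n)
      (fun z => ∑' n, a n * ff z n) atTop (Metric.closedBall (0:ℂ) R) := by
  apply tendstoUniformlyOn_tsum_nat (summable_bound hρ0 hρ1 R hR)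
  intro n x hx
  exact norm_term_le hab hR n (by simpa [Metric.mem_closedBall, Complex.dist_eq] using hx)

lemma tuo_compact (hρ0 : 0 < ρ) (hρ1 : ρ < 1) (hab : ∀ n : ℕ, a n = ((bb ρ n : ℝ) : ℂ)) {K : Set ℂ} (hK : IsCompact K) :
    TendstoUniformlyOn (fun N z => ∑ n ∈ Finset.range N, a n * ff z n)
      (fun z => ∑' n, a n * ff z n) atTop K := by
  obtain ⟨R, hRK⟩ := hK.isBounded.subset_closedBall 0
  have h : K ⊆ Metric.closedBall 0 (max R 0) :=
    hRK.trans (Metric.closedBall_subset_closedBall (le_max_left _ _))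
  exact (tuo_ball hρ0 hρ1 hab (le_max_right _ _)).mono h

lemma partial_diff (a : ℕ → ℂ) (N : ℕ) :
    Differentiable ℂ (fun z => ∑ n ∈ Finset.range N, a n * ff z n) := by
  apply Differentiable.fun_sum
  intro n _
  apply Differentiable.const_mul
  unfold ff
  apply Differentiable.fun_finsetProd
  intro k _
  exact differentiable_id.sub (differentiable_const _)

lemma f_diff (hρ0 : 0 < ρ) (hρ1 : ρ < 1) (hab : ∀ n : ℕ, a n = ((bb ρ n : ℝ) : ℂ)) : Differentiable ℂ (fun z => ∑' n, a n * ff z n) := by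
  rw [← differentiableOn_univ]
  apply TendstoLocallyUniformlyOn.differentiableOn (φ := atTop)
      (F := fun N z => ∑ n ∈ Finset.range N, a n * ff z n)
  · rw [tendstoLocallyUniformlyOn_iff_forall_isCompact isOpen_univ]
    intro K _ hK
    exact tuo_compact hρ0 hρ1 hab hK
  · exact Eventually.of_forall fun N => (partial_diff a N).differentiableOn
  · exact isOpen_univ

end conv

lemma upper_term_bound {ρ : ℝ} (hρ0 : 0 < ρ) (hρ1 : ρ < 1) {ε : ℝ} (hε : 0 < ε) :
    ∀ᶠ r : ℝ in atTop, ∀ n : ℕ,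
      bb ρ n * (r + n) ^ n ≤ Real.exp (r ^ (ρ + ε)) * (1/2 : ℝ) ^ n := by
  set δ : ℝ := 1/ρ - 1 with hδdef
  have hδ : 0 < δ := by
    have : 1 < 1/ρ := (one_lt_div hρ0).mpr hρ1
    rw [hδdef]; linarith
  set A : ℝ := Real.exp ((2/δ) * (2 * Real.log 2 - Real.log (δ/2))) with hAdef
  -- eventual conditions
  have ev3 : ∀ᶠ r : ℝ in atTop, (3:ℝ) ≤ r := eventually_ge_atTop 3
  have evA : ∀ᶠ r : ℝ in atTop, A ≤ r := eventually_ge_atTop A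
  have evc3 : ∀ᶠ r : ℝ in atTop, 2 * Real.log r + Real.log 4 ≤ r ^ (ε/2) := by
    have h1 := (isLittleO_log_rpow_atTop (by positivity : (0:ℝ) < ε/2)).bound
      (by norm_num : (0:ℝ) < 1/4)
    have h2 : Tendsto (fun r : ℝ => r ^ (ε/2)) atTop atTop :=
      tendsto_rpow_atTop (by positivity)
    filter_upwards [h1, h2.eventually_ge_atTop (4 * Real.log 4), eventually_ge_atTop 1]
      with r hr1 hr2 hr3
    rw [Real.norm_eq_abs, Real.norm_eq_abs, abs_of_nonneg (Real.log_nonneg hr3),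
      abs_of_nonneg (Real.rpow_nonneg (by linarith) _)] at hr1
    have hX : (0:ℝ) ≤ r ^ (ε/2) := Real.rpow_nonneg (by linarith) _
    linarith
  have evc4 : ∀ᶠ r : ℝ in atTop,
      Real.log (Real.log r) + Real.log 4 ≤ (ε/(2*ρ)) * Real.log r := by
    have hc : 0 < ε/(4*ρ) := by positivity
    have h2 : Tendsto (fun r : ℝ => (ε/(4*ρ)) * Real.log r) atTop atTop :=
      Tendsto.const_mul_atTop hc Real.tendsto_log_atTop
    filter_upwards [eventually_gt_atTop 1,
      h2.eventually_ge_atTop (Real.log 4 - Real.log (ε/(4*ρ)))] with r hr1 hr2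
    have := loglog_le hc hr1
    have : (ε/(2*ρ)) * Real.log r = (ε/(4*ρ)) * Real.log r + (ε/(4*ρ)) * Real.log r := by
      ring
    linarith [loglog_le hc hr1]
  filter_upwards [ev3, evA, evc3, evc4] with r hr3 hrA hc3 hc4
  intro n
  have hr0 : (0:ℝ) < r := by linarith
  have hr1 : (1:ℝ) < r := by linarith
  have hlr : (1:ℝ) ≤ Real.log r := by
    rw [show (1:ℝ) = Real.log (Real.exp 1) by simp]
    exact Real.log_le_log (Real.exp_pos 1) (by linarith [Real.exp_one_lt_d9])
  have hrpow : (0:ℝ) ≤ r ^ (ρ + ε) := Real.rpow_nonneg (le_of_lt hr0) _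
  rcases lt_or_ge n 2 with hn2 | hn2
  · rw [bb, if_pos hn2]
    have : (0:ℝ) ≤ (1/2:ℝ)^n := by positivity
    nlinarith [Real.exp_pos (r ^ (ρ + ε))]
  -- n ≥ 2
  have hln : 0 < Real.log n := log_pos_of_two_le hn2
  have hn1 : (1:ℝ) < n := by exact_mod_cast hn2.trans_lt' one_lt_two
  have hn0 : (0:ℝ) ≤ n := by positivity
  have hrn : (0:ℝ) < r + n := by positivity
  rw [bb_eq_exp hρ0 hn2,
    show (r + (n:ℝ)) ^ n = Real.exp (n * Real.log (r + n)) by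
      rw [Real.exp_nat_mul, Real.exp_log hrn],
    show ((1:ℝ)/2) ^ n = Real.exp (n * Real.log (1/2)) by
      rw [Real.exp_nat_mul, Real.exp_log (by norm_num)],
    ← Real.exp_add, ← Real.exp_add, Real.exp_le_exp, Real.log_div one_ne_zero two_ne_zero,
    Real.log_one]
  -- goal: EE ρ n + n * log (r+n) ≤ r^(ρ+ε) + n * (0 - log 2)
  rw [EE]
  have hEE : ((n:ℝ)/ρ) * Real.log n = (1 + δ) * ((n:ℝ) * Real.log n) := by
    rw [hδdef]; field_simp; try ring
  rcases le_or_gt r n with hcase | hcase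
  · -- n ≥ r : whole term ≤ 0
    have hAn : A ≤ (n:ℝ) := le_trans hrA hcase
    have hlogA : (2/δ) * (2 * Real.log 2 - Real.log (δ/2)) ≤ Real.log n := by
      rw [show (2/δ) * (2 * Real.log 2 - Real.log (δ/2)) = Real.log A by
        rw [hAdef, Real.log_exp]]
      exact Real.log_le_log (Real.exp_pos _) hAn
    have hlrn : Real.log (r + n) ≤ Real.log 2 + Real.log n := by
      rw [← Real.log_mul two_ne_zero (by positivity)]
      exact Real.log_le_log hrn (by linarith)
    have hll : Real.log (Real.log n) ≤ (δ/2) * Real.log n - Real.log (δ/2) :=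
      loglog_le (by positivity) hn1
    have key : Real.log (Real.log n) + Real.log (r + n) + Real.log 2
        ≤ (1 + δ) * Real.log n := by
      have h5 : (δ/2) * ((2/δ) * (2 * Real.log 2 - Real.log (δ/2))) ≤ (δ/2) * Real.log n :=
        mul_le_mul_of_nonneg_left hlogA (by positivity)
      have h6 : (δ/2) * ((2/δ) * (2 * Real.log 2 - Real.log (δ/2)))
          = 2 * Real.log 2 - Real.log (δ/2) := by field_simp
      calc Real.log (Real.log n) + Real.log (r + n) + Real.log 2
          ≤ ((δ/2) * Real.log n - Real.log (δ/2)) + (Real.log 2 + Real.log n)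
              + Real.log 2 := by linarith
        _ ≤ (δ/2) * Real.log n + (δ/2) * Real.log n + Real.log n := by linarith [h5, h6]
        _ = (1 + δ) * Real.log n := by ring
    rw [hEE]
    have := mul_le_mul_of_nonneg_left key hn0
    linarith [this, hrpow]
  · -- n < r
    have hlrn : Real.log (r + n) ≤ Real.log 2 + Real.log r := by
      rw [← Real.log_mul two_ne_zero (by positivity)]
      exact Real.log_le_log hrn (by linarith)
    have hlnr : Real.log n ≤ Real.log r := Real.log_le_log (by positivity) (le_of_lt hcase)
    have hlllr : Real.log (Real.log n) ≤ Real.log (Real.log r) :=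
      Real.log_le_log hln hlnr
    have hllr0 : 0 ≤ Real.log (Real.log r) := Real.log_nonneg hlr
    have hl4 : Real.log 4 = 2 * Real.log 2 := by
      rw [show (4:ℝ) = 2^2 by norm_num, Real.log_pow]; push_cast; ring
    rcases le_or_gt (n:ℝ) (r ^ (ρ + ε/2)) with hsub | hsub
    · -- small n
      have step1 : (n:ℝ) * Real.log (Real.log n) - ((n:ℝ)/ρ) * Real.log n
            + n * Real.log (r + n) + n * Real.log 2
          ≤ (n:ℝ) * (Real.log (Real.log r) + Real.log 4 + Real.log r) := by
        have h0 : 0 ≤ ((n:ℝ)/ρ) * Real.log n := by positivity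
        have p1 := mul_le_mul_of_nonneg_left hlllr hn0
        have p2 := mul_le_mul_of_nonneg_left hlrn hn0
        have hl4n : (n:ℝ) * Real.log 4 = (n:ℝ) * (2 * Real.log 2) := by rw [hl4]
        linarith [p1, p2, h0, hl4n]
      have hbr : 0 ≤ Real.log (Real.log r) + Real.log 4 + Real.log r := by
        nlinarith [Real.log_pos (by norm_num : (1:ℝ) < 4)]
      have step2 : (n:ℝ) * (Real.log (Real.log r) + Real.log 4 + Real.log r)
          ≤ r ^ (ρ + ε/2) * (r ^ (ε/2)) := by
        apply mul_le_mul hsub _ hbr (Real.rpow_nonneg (le_of_lt hr0) _)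
        have hllr : Real.log (Real.log r) ≤ Real.log r :=
          Real.log_le_self (by linarith)
        linarith [hc3]
      have step3 : r ^ (ρ + ε/2) * (r ^ (ε/2)) = r ^ (ρ + ε) := by
        rw [← Real.rpow_add hr0]; ring_nf
      linarith [step1, step2, step3]
    · -- large n : r^(ρ+ε/2) < n
      have hlnge : (ρ + ε/2) * Real.log r ≤ Real.log n := by
        rw [← Real.log_rpow hr0]
        exact Real.log_le_log (Real.rpow_pos_of_pos hr0 _) (le_of_lt hsub)
      have hfrac : (1/ρ) * ((ρ + ε/2) * Real.log r)
          = Real.log r + (ε/(2*ρ)) * Real.log r := by field_simp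
      have hbrneg : Real.log (Real.log n) - (1/ρ) * Real.log n
          + Real.log 2 + Real.log r + Real.log 2 ≤ 0 := by
        have h7 : (1/ρ) * ((ρ + ε/2) * Real.log r) ≤ (1/ρ) * Real.log n :=
          mul_le_mul_of_nonneg_left hlnge (by positivity)
        rw [hfrac] at h7
        have : Real.log (Real.log n) + Real.log 4 ≤ (ε/(2*ρ)) * Real.log r := by
          linarith [hlllr, hc4]
        linarith [hl4]
      have hEE2 : (n:ℝ) * Real.log (Real.log n) - ((n:ℝ)/ρ) * Real.log n
            + n * Real.log (r + n) + n * Real.log 2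
          ≤ (n:ℝ) * (Real.log (Real.log n) - (1/ρ) * Real.log n
              + Real.log 2 + Real.log r + Real.log 2) := by
        have h8 : ((n:ℝ)/ρ) * Real.log n = (n:ℝ) * ((1/ρ) * Real.log n) := by ring
        have p2 := mul_le_mul_of_nonneg_left hlrn hn0
        linarith [h8, p2]
      linarith [hEE2, mul_nonpos_of_nonneg_of_nonpos hn0 hbrneg, hrpow]


lemma nat_cast_ev {P : ℝ → Prop} (h : ∀ᶠ r : ℝ in atTop, P r) :
    ∀ᶠ m : ℕ in atTop, P m :=
  tendsto_natCast_atTop_atTop.eventually h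

lemma frequently_of_nat {P : ℝ → Prop} (h : ∀ᶠ m : ℕ in atTop, P m) :
    ∃ᶠ r : ℝ in atTop, P r := by
  rw [frequently_atTop]
  intro b
  obtain ⟨N, hN⟩ := h.exists_forall_of_atTop
  refine ⟨(max N ⌈b⌉₊ : ℕ), ?_, hN _ (le_max_left _ _)⟩
  calc b ≤ (⌈b⌉₊ : ℝ) := Nat.le_ceil b
    _ ≤ ((max N ⌈b⌉₊ : ℕ) : ℝ) := by exact_mod_cast le_max_right _ _

lemma lower_term {ρ : ℝ} (hρ0 : 0 < ρ) (hρ1 : ρ < 1) :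
    ∀ᶠ m : ℕ in atTop, ∃ n : ℕ, 2 ≤ n ∧ n ≤ m ∧
      Real.exp ((1/8) * (m:ℝ) ^ ρ * Real.log (Real.log m))
        ≤ bb ρ n * ∏ k ∈ Finset.range n, ((m:ℝ) - k) := by
  have ev1 : ∀ᶠ x : ℝ in atTop, (3:ℝ) ≤ x := eventually_ge_atTop 3
  have ev2 : ∀ᶠ x : ℝ in atTop, (4:ℝ) ≤ x ^ ρ :=
    (tendsto_rpow_atTop hρ0).eventually_ge_atTop 4
  have ev3 : ∀ᶠ x : ℝ in atTop, x ^ (ρ - 1) ≤ 1/2 := by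
    have := tendsto_rpow_neg_atTop (by linarith : 0 < 1 - ρ)
    have h := this.eventually (eventually_le_nhds (by norm_num : (0:ℝ) < 1/2))
    simpa [neg_sub] using h
  have ev4 : ∀ᶠ x : ℝ in atTop, Real.log 2 ≤ (ρ/2) * Real.log x :=
    (Tendsto.const_mul_atTop (by positivity) Real.tendsto_log_atTop).eventually_ge_atTop _
  have evll : Tendsto (fun x : ℝ => Real.log (Real.log x)) atTop atTop :=
    Real.tendsto_log_atTop.comp Real.tendsto_log_atTop
  have ev5 : ∀ᶠ x : ℝ in atTop,
      -Real.log (ρ/2) ≤ (1/2) * Real.log (Real.log x) :=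
    (Tendsto.const_mul_atTop (by norm_num) evll).eventually_ge_atTop _
  have ev6 : ∀ᶠ x : ℝ in atTop, 4 * Real.log 2 ≤ Real.log (Real.log x) :=
    evll.eventually_ge_atTop _
  filter_upwards [nat_cast_ev ev1, nat_cast_ev ev2, nat_cast_ev ev3, nat_cast_ev ev4,
    nat_cast_ev ev5, nat_cast_ev ev6] with m h1 h2 h3 h4 h5 h6
  set x : ℝ := (m : ℝ) with hxdef
  have hx0 : (0:ℝ) < x := by linarith
  have hx1 : (1:ℝ) < x := by linarith
  have hlx : 0 < Real.log x := Real.log_pos hx1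
  set n : ℕ := ⌊x ^ ρ⌋₊ with hndef
  have hxρ0 : (0:ℝ) < x ^ ρ := Real.rpow_pos_of_pos hx0 _
  have hnle : (n:ℝ) ≤ x ^ ρ := Nat.floor_le (le_of_lt hxρ0)
  have hngt : x ^ ρ - 1 < (n:ℝ) := by
    have := Nat.lt_floor_add_one (x ^ ρ)
    linarith
  have hnge : x ^ ρ / 2 ≤ (n:ℝ) := by linarith
  have hxhalf : x ^ ρ ≤ x / 2 := by
    have : x ^ ρ = x ^ (ρ - 1) * x := by
      rw [← Real.rpow_add_one (ne_of_gt hx0)]; ring_nf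
    rw [this]
    calc x ^ (ρ - 1) * x ≤ (1/2) * x := by
          apply mul_le_mul_of_nonneg_right h3 (le_of_lt hx0)
      _ = x / 2 := by ring
  have hn2 : 2 ≤ n := by
    have : (2:ℝ) ≤ (n:ℝ) := by linarith
    exact_mod_cast this
  have hnm : (n:ℝ) ≤ x / 2 := le_trans hnle hxhalf
  have hnmN : n ≤ m := by
    have : (n:ℝ) ≤ (m:ℝ) := by rw [← hxdef]; linarith
    exact_mod_cast this
  refine ⟨n, hn2, hnmN, ?_⟩
  have hln : 0 < Real.log n := log_pos_of_two_le hn2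
  -- log n bounds
  have hlogn_le : Real.log n ≤ ρ * Real.log x := by
    rw [← Real.log_rpow hx0]
    exact Real.log_le_log (by positivity) hnle
  have hlogn_ge : (ρ/2) * Real.log x ≤ Real.log n := by
    have h7 : ρ * Real.log x - Real.log 2 ≤ Real.log n := by
      rw [← Real.log_rpow hx0, ← Real.log_div (ne_of_gt hxρ0) two_ne_zero]
      exact Real.log_le_log (by positivity) hnge
    have : (ρ/2) * Real.log x = ρ * Real.log x - (ρ/2) * Real.log x := by ring
    linarith
  have hloglogn : (1/2) * Real.log (Real.log x) ≤ Real.log (Real.log n) := by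
    have h8 : Real.log (ρ/2) + Real.log (Real.log x) ≤ Real.log (Real.log n) := by
      rw [← Real.log_mul (by positivity) (ne_of_gt hlx)]
      exact Real.log_le_log (by positivity) hlogn_ge
    linarith
  -- product lower bound
  have hfac : (0:ℝ) < x - n := by linarith
  have hprod : (x - n) ^ n ≤ ∏ k ∈ Finset.range n, (x - (k:ℝ)) := by
    have hc : (x - (n:ℝ)) ^ n = ∏ _k ∈ Finset.range n, (x - (n:ℝ)) := by
      rw [Finset.prod_const, Finset.card_range]
    rw [hc]
    apply Finset.prod_le_prod (fun k _ => le_of_lt hfac)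
    intro k hk
    have : (k:ℝ) ≤ n := by
      exact_mod_cast le_of_lt (Finset.mem_range.mp hk)
    linarith
  rw [bb_eq_exp hρ0 hn2]
  have hexp : Real.exp (EE ρ n + (n:ℝ) * Real.log (x - n))
      ≤ Real.exp (EE ρ n) * ∏ k ∈ Finset.range n, (x - (k:ℝ)) := by
    rw [Real.exp_add]
    apply mul_le_mul_of_nonneg_left _ (le_of_lt (Real.exp_pos _))
    rw [show (n:ℝ) * Real.log (x - n) = (n:ℝ) * Real.log (x - n) from rfl,
      Real.exp_nat_mul, Real.exp_log hfac]
    exact hprod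
  refine le_trans (Real.exp_le_exp.mpr ?_) hexp
  -- final exponent inequality
  have hlogfac : Real.log (x/2) ≤ Real.log (x - n) := by
    apply Real.log_le_log (by positivity)
    linarith
  have hlogx2 : Real.log (x/2) = Real.log x - Real.log 2 := by
    rw [Real.log_div (ne_of_gt hx0) two_ne_zero]
  rw [EE]
  have hdiv : ((n:ℝ)/ρ) * Real.log n ≤ (n:ℝ) * Real.log x := by
    have h9 : ((n:ℝ)/ρ) * Real.log n ≤ ((n:ℝ)/ρ) * (ρ * Real.log x) :=
      mul_le_mul_of_nonneg_left hlogn_le (by positivity)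
    have h10 : ((n:ℝ)/ρ) * (ρ * Real.log x) = (n:ℝ) * Real.log x := by
      field_simp
    linarith
  have hn0 : (0:ℝ) ≤ n := by positivity
  have hllx0 : 0 ≤ Real.log (Real.log x) := by linarith [h6, Real.log_pos one_lt_two]
  have hlog2 : 0 < Real.log 2 := Real.log_pos one_lt_two
  have hq1 : (n:ℝ) * ((1/4) * Real.log (Real.log x))
      ≤ (n:ℝ) * (Real.log (Real.log n) - Real.log 2) := by
    apply mul_le_mul_of_nonneg_left _ hn0
    have : Real.log 2 ≤ (1/4) * Real.log (Real.log x) := by linarith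
    linarith [hloglogn]
  have hq2 : (1/8) * x ^ ρ * Real.log (Real.log x)
      ≤ (n:ℝ) * ((1/4) * Real.log (Real.log x)) := by
    have := mul_le_mul_of_nonneg_right hnge hllx0
    nlinarith
  have hq3 : (n:ℝ) * Real.log (x - n)
      ≥ (n:ℝ) * Real.log x - (n:ℝ) * Real.log 2 := by
    have := mul_le_mul_of_nonneg_left hlogfac hn0
    rw [hlogx2] at this
    linarith [this]
  linarith [hq1, hq2, hq3, hdiv]

theorem example_maximum_type (ρ : ℝ) (hρ0 : 0 < ρ) (hρ1 : ρ < 1)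
    (a : ℕ → ℂ)
    (ha : ∀ n : ℕ, a n = if n < 2 then 0 else
      (((Real.log n ^ ρ / (n : ℝ)) ^ ((n : ℝ) / ρ) : ℝ) : ℂ)) :
    ∃ f : ℂ → ℂ, Differentiable ℂ f ∧
      (∀ K : Set ℂ, IsCompact K →
        TendstoUniformlyOn (fun N z => ∑ n ∈ Finset.range N, a n * ff z n) f
          Filter.atTop K) ∧
      growthOrder f = ρ ∧ growthTypeE f ρ = ⊤ := by
  have hab : ∀ n : ℕ, a n = ((bb ρ n : ℝ) : ℂ) := by
    intro n; rw [ha n, bb]; split <;> simp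
  set f : ℂ → ℂ := fun z => ∑' n, a n * ff z n with hf
  have hdiff : Differentiable ℂ f := f_diff hρ0 hρ1 hab
  have hcont : Continuous f := hdiff.continuous
  -- upper bound for maxMod
  have hMle : ∀ ε : ℝ, 0 < ε → ∀ᶠ r : ℝ in atTop,
      maxMod f r ≤ 2 * Real.exp (r ^ (ρ + ε)) := by
    intro ε hε
    filter_upwards [upper_term_bound hρ0 hρ1 hε, eventually_ge_atTop (0:ℝ)] with r hub hr0
    apply maxMod_le (by positivity)
    intro z hz
    have hsum : Summable (fun n => ‖a n * ff z n‖) :=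
      Summable.of_nonneg_of_le (fun n => norm_nonneg _)
        (fun n => norm_term_le hab hr0 n hz) (summable_bound hρ0 hρ1 r hr0)
    have hgeo : Summable (fun n : ℕ => Real.exp (r ^ (ρ + ε)) * (1/2:ℝ)^n) :=
      (summable_geometric_of_lt_one (by norm_num) (by norm_num)).mul_left _
    calc ‖f z‖ ≤ ∑' n, ‖a n * ff z n‖ := norm_tsum_le_tsum_norm hsum
      _ ≤ ∑' n : ℕ, Real.exp (r ^ (ρ + ε)) * (1/2:ℝ)^n := by
          apply Summable.tsum_le_tsum _ hsum hgeo
          intro n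
          exact le_trans (norm_term_le hab hr0 n hz) (hub n)
      _ = 2 * Real.exp (r ^ (ρ + ε)) := by
          rw [tsum_mul_left, tsum_geometric_of_lt_one (by norm_num) (by norm_num)]
          norm_num [mul_comm]
  -- lower bound along naturals
  have hMgeN : ∀ᶠ m : ℕ in atTop,
      Real.exp ((1/8) * (m:ℝ)^ρ * Real.log (Real.log m)) ≤ maxMod f (m:ℝ) := by
    filter_upwards [lower_term hρ0 hρ1] with m hm
    obtain ⟨n, hn2, hnm, hterm⟩ := hm
    set c : ℕ → ℝ := fun k => bb ρ k * ∏ j ∈ Finset.range k, ((m:ℝ) - j) with hc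
    have hceq : ∀ k, a k * ff (m:ℂ) k = ((c k : ℝ) : ℂ) := by
      intro k
      rw [hab, hc, ff]
      push_cast
      ring
    have hcnonneg : ∀ k, 0 ≤ c k := by
      intro k
      rcases le_or_gt k m with hk | hk
      · apply mul_nonneg (bb_nonneg ρ k)
        apply Finset.prod_nonneg
        intro j hj
        have : (j:ℝ) < k := by exact_mod_cast Finset.mem_range.mp hj
        have : (k:ℝ) ≤ m := by exact_mod_cast hk
        linarith
      · have : (∏ j ∈ Finset.range k, ((m:ℝ) - j)) = 0 := by
          apply Finset.prod_eq_zero (Finset.mem_range.mpr hk)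
          simp
        rw [hc]; simp [this]
    have hm0 : (0:ℝ) ≤ (m:ℝ) := by positivity
    have hcle : ∀ k, c k ≤ bb ρ k * ((m:ℝ) + k)^k := by
      intro k
      have h1 : (c k : ℂ) = a k * ff (m:ℂ) k := (hceq k).symm
      have h2 : c k = ‖a k * ff (m:ℂ) k‖ := by
        rw [← h1, Complex.norm_real, Real.norm_eq_abs, abs_of_nonneg (hcnonneg k)]
      rw [h2]
      exact norm_term_le hab hm0 k (by simp)
    have hcsum : Summable c :=
      Summable.of_nonneg_of_le hcnonneg hcle (summable_bound hρ0 hρ1 (m:ℝ) hm0)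
    have hfm : f (m:ℂ) = ((∑' k, c k : ℝ) : ℂ) := by
      rw [hf]
      simp only [hceq]
      rw [← Complex.ofReal_tsum]
    have htsum_ge : c n ≤ ∑' k, c k := Summable.le_tsum hcsum n (fun j _ => hcnonneg j)
    have hnorm : ‖f (m:ℂ)‖ = ∑' k, c k := by
      rw [hfm, Complex.norm_real, Real.norm_eq_abs,
        abs_of_nonneg (tsum_nonneg hcnonneg)]
    calc Real.exp ((1/8) * (m:ℝ)^ρ * Real.log (Real.log m))
        ≤ c n := hterm
      _ ≤ ∑' k, c k := htsum_ge
      _ = ‖f (m:ℂ)‖ := hnorm.symm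
      _ ≤ maxMod f (m:ℝ) := le_maxMod hcont (by simp)
  -- auxiliary tendsto facts
  have hTend : Tendsto (fun m : ℕ => (1/8) * (m:ℝ)^ρ * Real.log (Real.log m))
      atTop atTop := by
    have h1 : Tendsto (fun m : ℕ => (m:ℝ)^ρ) atTop atTop :=
      (tendsto_rpow_atTop hρ0).comp tendsto_natCast_atTop_atTop
    have h2 : Tendsto (fun m : ℕ => Real.log (Real.log m)) atTop atTop :=
      (Real.tendsto_log_atTop.comp Real.tendsto_log_atTop).comp tendsto_natCast_atTop_atTop
    have := (Tendsto.const_mul_atTop (by norm_num : (0:ℝ) < 1/8) h1).atTop_mul_atTop₀ h2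
    simpa [mul_assoc] using this
  have hLLTend : Tendsto (fun m : ℕ => Real.log (Real.log m)) atTop atTop :=
    (Real.tendsto_log_atTop.comp Real.tendsto_log_atTop).comp tendsto_natCast_atTop_atTop
  -- eventually maxMod is big (over the reals)
  have hMbig : ∀ᶠ r : ℝ in atTop, Real.exp 1 ≤ maxMod f r := by
    have hN : ∀ᶠ m : ℕ in atTop,
        Real.exp 1 ≤ maxMod f (m:ℝ) := by
      filter_upwards [hMgeN, hTend.eventually_ge_atTop 1] with m h1 h2
      exact le_trans (Real.exp_le_exp.mpr h2) h1
    filter_upwards [tendsto_nat_floor_atTop.eventually hN, eventually_ge_atTop (0:ℝ)]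
      with r hfl hr0
    calc Real.exp 1 ≤ maxMod f (⌊r⌋₊ : ℝ) := hfl
      _ ≤ maxMod f r := maxMod_mono hcont (by positivity) (Nat.floor_le hr0)
  -- frequently the order ratio is at least ρ
  have hOfreq : ∃ᶠ r : ℝ in atTop,
      ρ ≤ Real.log (Real.log (maxMod f r)) / Real.log r := by
    apply frequently_of_nat
    filter_upwards [hMgeN, hLLTend.eventually_ge_atTop 8,
      nat_cast_ev (eventually_ge_atTop (3:ℝ))] with m h1 h2 h3
    have hm0 : (0:ℝ) < (m:ℝ) := by linarith
    have hm1 : (1:ℝ) < (m:ℝ) := by linarith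
    have hlm : 0 < Real.log (m:ℝ) := Real.log_pos hm1
    have hrp : (0:ℝ) < (m:ℝ)^ρ := Real.rpow_pos_of_pos hm0 _
    have hM0 : 0 < maxMod f (m:ℝ) := lt_of_lt_of_le (Real.exp_pos _) h1
    have hlogM : (m:ℝ)^ρ ≤ Real.log (maxMod f (m:ℝ)) := by
      rw [Real.le_log_iff_exp_le hM0]
      refine le_trans (Real.exp_le_exp.mpr ?_) h1
      nlinarith [hrp]
    have hll : ρ * Real.log (m:ℝ) ≤ Real.log (Real.log (maxMod f (m:ℝ))) := by
      rw [← Real.log_rpow hm0]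
      exact Real.log_le_log hrp hlogM
    rw [le_div_iff₀ hlm]
    exact hll
  -- order ratio eventual upper bound
  have hOub : ∀ ε : ℝ, 0 < ε → ∀ᶠ r : ℝ in atTop,
      Real.log (Real.log (maxMod f r)) / Real.log r ≤ ρ + 2*ε := by
    intro ε hε
    have hev2 : ∀ᶠ r : ℝ in atTop, Real.log 2 / ε ≤ Real.log r :=
      Real.tendsto_log_atTop.eventually_ge_atTop _
    filter_upwards [hMle ε hε, hMbig, eventually_ge_atTop (3:ℝ), hev2]
      with r hle hbig h3 hlr2
    have hr0 : (0:ℝ) < r := by linarith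
    have hr1 : (1:ℝ) < r := by linarith
    have hlr : 0 < Real.log r := Real.log_pos hr1
    have hM0 : 0 < maxMod f r := lt_of_lt_of_le (Real.exp_pos _) hbig
    have hL1 : 1 ≤ Real.log (maxMod f r) := by
      rw [show (1:ℝ) = Real.log (Real.exp 1) by rw [Real.log_exp]]
      exact Real.log_le_log (Real.exp_pos _) hbig
    have hL0 : 0 < Real.log (maxMod f r) := by linarith
    have hrp1 : (1:ℝ) ≤ r ^ (ρ+ε) := by
      rw [show (1:ℝ) = 1 ^ (ρ+ε) by rw [Real.one_rpow]]
      exact Real.rpow_le_rpow zero_le_one (le_of_lt hr1) (by positivity)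
    have hlog2le : Real.log 2 ≤ 1 := by
      linarith [Real.log_le_sub_one_of_pos (by norm_num : (0:ℝ) < 2)]
    have hLle : Real.log (maxMod f r) ≤ Real.log 2 + r ^ (ρ+ε) := by
      calc Real.log (maxMod f r) ≤ Real.log (2 * Real.exp (r ^ (ρ+ε))) :=
            Real.log_le_log hM0 hle
        _ = Real.log 2 + r ^ (ρ+ε) := by
            rw [Real.log_mul two_ne_zero (Real.exp_ne_zero _), Real.log_exp]
    have hLL : Real.log (Real.log (maxMod f r)) ≤ Real.log 2 + (ρ+ε) * Real.log r := by
      calc Real.log (Real.log (maxMod f r)) ≤ Real.log (2 * r ^ (ρ+ε)) := by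
            apply Real.log_le_log hL0
            linarith
        _ = Real.log 2 + (ρ+ε) * Real.log r := by
            rw [Real.log_mul two_ne_zero (by positivity), Real.log_rpow hr0]
    rw [div_le_iff₀ hlr]
    have hεlr : Real.log 2 ≤ Real.log r * ε := (div_le_iff₀ hε).mp hlr2
    nlinarith [hLL, hεlr]
  -- type: frequently big
  have hTfreq : ∀ C : ℝ, ∃ᶠ r : ℝ in atTop, C ≤ Real.log (maxMod f r) / r ^ ρ := by
    intro C
    apply frequently_of_nat
    filter_upwards [hMgeN, hLLTend.eventually_ge_atTop (8 * |C| + 8),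
      nat_cast_ev (eventually_ge_atTop (3:ℝ))] with m h1 h2 h3
    have hm0 : (0:ℝ) < (m:ℝ) := by linarith
    have hrp : (0:ℝ) < (m:ℝ)^ρ := Real.rpow_pos_of_pos hm0 _
    have hM0 : 0 < maxMod f (m:ℝ) := lt_of_lt_of_le (Real.exp_pos _) h1
    have hlogM : (1/8) * (m:ℝ)^ρ * Real.log (Real.log m)
        ≤ Real.log (maxMod f (m:ℝ)) := by
      rw [Real.le_log_iff_exp_le hM0]; exact h1
    rw [le_div_iff₀ hrp]
    have hC : C ≤ (1/8) * Real.log (Real.log m) := by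
      linarith [le_abs_self C]
    have := mul_le_mul_of_nonneg_right hC (le_of_lt hrp)
    nlinarith [this, hlogM]
  -- assemble: order
  have hBdd : IsBoundedUnder (· ≤ ·) atTop
      (fun r : ℝ => Real.log (Real.log (maxMod f r)) / Real.log r) := by
    apply isBoundedUnder_of_eventually_le (a := ρ + 2)
    simpa using hOub 1 one_pos
  have hCob : IsCoboundedUnder (· ≤ ·) atTop
      (fun r : ℝ => Real.log (Real.log (maxMod f r)) / Real.log r) :=
    IsCoboundedUnder.of_frequently_ge hOfreq
  have hOrder : growthOrder f = ρ := by
    apply le_antisymm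
    · rw [growthOrder]
      by_contra h
      push_neg at h
      have hε : 0 < ((limsup (fun r : ℝ =>
          Real.log (Real.log (maxMod f r)) / Real.log r) atTop) - ρ)/4 := by linarith
      have hle := limsup_le_of_le hCob (hOub _ hε)
      linarith
    · exact le_limsup_of_frequently_le hOfreq hBdd
  have hType : growthTypeE f ρ = ⊤ := by
    rw [EReal.eq_top_iff_forall_lt]
    intro C
    have h1 : ((C+1 : ℝ) : EReal) ≤ growthTypeE f ρ := by
      rw [growthTypeE]
      apply le_limsup_of_frequently_le'
      exact (hTfreq (C+1)).mono (fun r hr => by exact_mod_cast hr)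
    calc (C : EReal) < ((C+1:ℝ) : EReal) := by exact_mod_cast lt_add_one C
      _ ≤ _ := h1
  exact ⟨f, hdiff, fun K hK => tuo_compact hρ0 hρ1 hab hK, hOrder, hType⟩
end
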